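/- arXiv:2408.13911 — 9 statements merged into one kernel-verified Lean document; each statement's English description precedes it below -/
import Mathlib

section
/- Let L be a frame and let (u_n, v_n)_{n∈ℕ} be a sequence of measurable-function pairs on L (each satisfying (R1)–(R4)). Assume that for every q ∈ ℚ the join ⨆_{n∈ℕ} v_n q is a complemented element of L. Define Q q := ⨆_{n∈ℕ} v_n q and P p := ⨆_{r∈ℚ, r>p} (⨆_{n∈ℕ} v_n r)ᶜ. Then the pair (P, Q) satisfies (R1)–(R4) and is the greatest lower bound of the set {(u_n, v_n) : n ∈ ℕ} with respect to the order on pairs. Moreover, if every (u_n, v_n) also satisfies (R5)–(R6) and ⨆_{q∈ℚ} (⨆_{n∈ℕ} v_n q)ᶜ = ⊤, then (P, Q) satisfies (R5)–(R6). -/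
/-- A pair `(u, v)` of maps `ℚ → L` encoding a measurable extended real function on the
frame `L`, i.e. satisfying the defining relations (R1)–(R4) of the frame of extended reals. -/
def IsMeasPair {L : Type*} [Order.Frame L] (u v : ℚ → L) : Prop :=
  (∀ p q : ℚ, q ≤ p → u p ⊓ v q = ⊥) ∧
  (∀ p q : ℚ, p < q → u p ⊔ v q = ⊤) ∧
  (∀ p : ℚ, u p = ⨆ r : ℚ, ⨆ _ : p < r, u r) ∧
  (∀ q : ℚ, v q = ⨆ s : ℚ, ⨆ _ : s < q, v s)

/-- The pair is finite, i.e. also satisfies (R5)–(R6), encoding a measurable real function. -/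
def IsFinitePair {L : Type*} [Order.Frame L] (u v : ℚ → L) : Prop :=
  (⨆ p : ℚ, u p) = ⊤ ∧ (⨆ q : ℚ, v q) = ⊤

/-- The order on pairs: `(u, v) ≤ (u', v')`. -/
def PairLE {L : Type*} [Order.Frame L] (u v u' v' : ℚ → L) : Prop :=
  (∀ p : ℚ, u p ≤ u' p) ∧ (∀ q : ℚ, v' q ≤ v q)

theorem countable_meet_of_measPairs {L : Type*} [Order.Frame L]
    (u v : ℕ → ℚ → L) (hR : ∀ n, IsMeasPair (u n) (v n))
    (c : ℚ → L) (hc : ∀ q : ℚ, IsCompl (⨆ n, v n q) (c q))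
    (Q : ℚ → L) (hQ : Q = fun q => ⨆ n, v n q)
    (P : ℚ → L) (hP : P = fun p => ⨆ r : ℚ, ⨆ _ : p < r, c r) :
    IsMeasPair P Q ∧
    (∀ n, PairLE P Q (u n) (v n)) ∧
    (∀ u' v' : ℚ → L, IsMeasPair u' v' → (∀ n, PairLE u' v' (u n) (v n)) →
      PairLE u' v' P Q) ∧
    ((∀ n, IsFinitePair (u n) (v n)) → (⨆ q : ℚ, c q) = ⊤ → IsFinitePair P Q) := by
  subst hQ hP
  have vmono : ∀ n, ∀ s q : ℚ, s < q → v n s ≤ v n q := by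
    intro n s q h
    rw [(hR n).2.2.2 q]
    exact le_iSup_of_le s (le_iSup_of_le h le_rfl)
  have key1 : ∀ n (p r : ℚ), p < r → c r ≤ u n p := by
    intro n p r hpr
    have h1 : c r ⊓ v n r = ⊥ := by
      have := inf_le_inf_left (c r) (le_iSup (fun n => v n r) n)
      exact le_bot_iff.mp (this.trans_eq (hc r).symm.inf_eq_bot)
    have h2 : c r = c r ⊓ (u n p ⊔ v n r) := by
      rw [(hR n).2.1 p r hpr, inf_top_eq]
    calc c r = (c r ⊓ u n p) ⊔ (c r ⊓ v n r) := by rw [← inf_sup_left, ← h2]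
      _ = c r ⊓ u n p := by rw [h1, sup_bot_eq]
      _ ≤ u n p := inf_le_right
  have Qmono : ∀ s q : ℚ, s < q → (⨆ n, v n s) ≤ ⨆ n, v n q :=
    fun s q h => iSup_mono fun n => vmono n s q h
  refine ⟨⟨?_, ?_, ?_, ?_⟩, ?_, ?_, ?_⟩
  · -- R1
    intro p q hqp
    simp only [iSup_inf_eq]
    rw [eq_bot_iff]
    refine iSup_le fun r => iSup_le fun hpr => ?_
    have hQ : (⨆ n, v n q) ≤ ⨆ n, v n r := Qmono q r (hqp.trans_lt hpr)
    calc c r ⊓ ⨆ n, v n q ≤ c r ⊓ ⨆ n, v n r := inf_le_inf_left _ hQ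
      _ = ⊥ := by rw [inf_comm]; exact (hc r).inf_eq_bot
  · -- R2
    intro p q hpq
    obtain ⟨r, hpr, hrq⟩ := exists_between hpq
    rw [eq_top_iff]
    calc (⊤ : L) = (⨆ n, v n r) ⊔ c r := (hc r).sup_eq_top.symm
      _ ≤ (⨆ s : ℚ, ⨆ _ : p < s, c s) ⊔ ⨆ n, v n q :=
        sup_le (le_sup_of_le_right (Qmono r q hrq))
          (le_sup_of_le_left (le_iSup_of_le r (le_iSup_of_le hpr le_rfl)))
      _ = _ := by rw [sup_comm]
  · -- R3
    intro p
    apply le_antisymm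
    · refine iSup_le fun r => iSup_le fun hpr => ?_
      obtain ⟨s, hps, hsr⟩ := exists_between hpr
      exact le_iSup_of_le s (le_iSup_of_le hps
        (le_iSup_of_le r (le_iSup_of_le hsr le_rfl)))
    · refine iSup_le fun r => iSup_le fun hpr => ?_
      refine iSup_le fun t => iSup_le fun hrt => ?_
      exact le_iSup_of_le t (le_iSup_of_le (hpr.trans hrt) le_rfl)
  · -- R4
    intro q
    apply le_antisymm
    · refine iSup_le fun n => ?_
      rw [(hR n).2.2.2 q]
      refine iSup_le fun s => iSup_le fun hsq => ?_
      exact le_iSup_of_le s (le_iSup_of_le hsq (le_iSup (fun n => v n s) n))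
    · refine iSup_le fun s => iSup_le fun hsq => iSup_le fun n => ?_
      exact le_iSup_of_le n (vmono n s q hsq)
  · -- lower bound
    intro n
    refine ⟨fun p => ?_, fun q => le_iSup (fun n => v n q) n⟩
    exact iSup_le fun r => iSup_le fun hpr => key1 n p r hpr
  · -- greatest lower bound
    intro u' v' hmp hlb
    constructor
    · intro p
      rw [hmp.2.2.1 p]
      refine iSup_le fun r => iSup_le fun hpr => ?_
      obtain ⟨s, hps, hsr⟩ := exists_between hpr
      have h1 : u' r ⊓ (⨆ n, v n s) = ⊥ := by
        rw [inf_iSup_eq, eq_bot_iff]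
        refine iSup_le fun n => ?_
        calc u' r ⊓ v n s ≤ u n r ⊓ v n s := inf_le_inf_right _ ((hlb n).1 r)
          _ = ⊥ := (hR n).1 r s hsr.le
      have h2 : u' r ≤ c s := by
        calc u' r = u' r ⊓ ((⨆ n, v n s) ⊔ c s) := by rw [(hc s).sup_eq_top, inf_top_eq]
          _ = (u' r ⊓ ⨆ n, v n s) ⊔ (u' r ⊓ c s) := inf_sup_left _ _ _
          _ = u' r ⊓ c s := by rw [h1, bot_sup_eq]
          _ ≤ c s := inf_le_right
      exact h2.trans (le_iSup_of_le s (le_iSup_of_le hps le_rfl))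
    · intro q
      exact iSup_le fun n => (hlb n).2 q
  · -- finiteness
    intro hfin htop
    constructor
    · rw [eq_top_iff, ← htop]
      refine iSup_le fun q => ?_
      exact le_iSup_of_le (q - 1) (le_iSup_of_le q (le_iSup_of_le (by linarith) le_rfl))
    · rw [eq_top_iff, ← (hfin 0).2]
      exact iSup_mono fun q => le_iSup (fun n => v n q) 0
end

section
/- Let L be a frame and let (u_n, v_n)_{n∈ℕ} be a sequence of pairs each satisfying (R1)–(R6), such that ⨆_{n∈ℕ} v_n q is complemented in L for every q ∈ ℚ. Suppose there exists a pair (u, v) satisfying (R1)–(R6) with (u, v) ≤ (u_n, v_n) for every n ∈ ℕ. Then ⨆_{q∈ℚ} (⨆_{n∈ℕ} v_n q)ᶜ = ⊤; consequently the pair (P, Q) with Q q := ⨆_{n} v_n q and P p := ⨆_{r>p} (⨆_{n} v_n r)ᶜ satisfies (R1)–(R6), i.e. the infimum of the sequence exists among finite measurable functions. -/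
theorem inf_exists_of_lower_bound {L : Type*} [Order.Frame L]
    (u v : ℕ → ℚ → L)
    (hR : ∀ n, IsMeasPair (u n) (v n)) (hF : ∀ n, IsFinitePair (u n) (v n))
    (c : ℚ → L) (hc : ∀ q : ℚ, IsCompl (⨆ n, v n q) (c q))
    (u' v' : ℚ → L) (h'R : IsMeasPair u' v') (h'F : IsFinitePair u' v')
    (hlb : ∀ n, PairLE u' v' (u n) (v n))
    (Q : ℚ → L) (hQ : Q = fun q => ⨆ n, v n q)
    (P : ℚ → L) (hP : P = fun p => ⨆ r : ℚ, ⨆ _ : p < r, c r) :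
    (⨆ q : ℚ, c q) = ⊤ ∧ IsMeasPair P Q ∧ IsFinitePair P Q := by
  obtain ⟨hR1', hR2', hR3', hR4'⟩ := h'R
  obtain ⟨hF5', hF6'⟩ := h'F
  -- monotonicity of each v n
  have hvmono : ∀ n, Monotone (v n) := by
    intro n q r hqr
    rcases eq_or_lt_of_le hqr with h | h
    · exact h ▸ le_rfl
    · rw [(hR n).2.2.2 r]
      exact le_iSup_of_le q (le_iSup_of_le h le_rfl)
  have hQmono : Monotone Q := by
    subst hQ; exact fun q r h => iSup_mono fun n => hvmono n h
  have hQc : ∀ q, Q q ⊓ c q = ⊥ := by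
    intro q; subst hQ; exact (hc q).inf_eq_bot
  have hQs : ∀ q, Q q ⊔ c q = ⊤ := by
    intro q; subst hQ; exact (hc q).sup_eq_top
  have hcP : ∀ p r : ℚ, p < r → c r ≤ P p := by
    intro p r h; subst hP; exact le_iSup_of_le r (le_iSup_of_le h le_rfl)
  -- the key claim
  have hclaim : (⨆ q : ℚ, c q) = ⊤ := by
    rw [← top_le_iff, ← hF5']
    refine iSup_le fun p => le_iSup_of_le p ?_
    rw [(hc p).le_right_iff, disjoint_iff, inf_iSup_eq]
    refine iSup_eq_bot.2 fun n => le_bot_iff.1 ?_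
    calc u' p ⊓ v n p ≤ u' p ⊓ v' p := inf_le_inf_left _ ((hlb n).2 p)
    _ = ⊥ := hR1' p p le_rfl
  refine ⟨hclaim, ⟨?_, ?_, ?_, ?_⟩, ?_, ?_⟩
  · -- R1
    intro p q hqp
    subst hP
    rw [iSup_inf_eq]
    refine le_bot_iff.1 (iSup_le fun r => ?_)
    rw [iSup_inf_eq]
    refine iSup_le fun hpr => ?_
    calc c r ⊓ Q q ≤ c r ⊓ Q r := inf_le_inf_left _ (hQmono (hqp.trans hpr.le))
    _ = ⊥ := by rw [inf_comm]; exact hQc r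
  · -- R2
    intro p q hpq
    obtain ⟨r, hpr, hrq⟩ := exists_between hpq
    rw [← top_le_iff, ← hQs r]
    exact sup_le (le_sup_of_le_right (hQmono hrq.le)) (le_sup_of_le_left (hcP p r hpr))
  · -- R3
    intro p
    refine le_antisymm ?_ (iSup_le fun r => iSup_le fun hpr => ?_)
    · subst hP
      refine iSup_le fun r => iSup_le fun hpr => ?_
      obtain ⟨t, hpt, htr⟩ := exists_between hpr
      exact le_iSup_of_le t (le_iSup_of_le hpt
        (le_iSup_of_le r (le_iSup_of_le htr le_rfl)))
    · subst hP
      exact iSup_le fun s => iSup_le fun hrs =>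
        le_iSup_of_le s (le_iSup_of_le (hpr.trans hrs) le_rfl)
  · -- R4
    intro q
    refine le_antisymm ?_ (iSup_le fun s => iSup_le fun hsq => hQmono hsq.le)
    subst hQ
    refine iSup_le fun n => ?_
    rw [(hR n).2.2.2 q]
    exact iSup_le fun s => iSup_le fun hsq =>
      le_iSup_of_le s (le_iSup_of_le hsq (le_iSup_of_le n le_rfl))
  · -- R5
    rw [← top_le_iff, ← hclaim]
    exact iSup_le fun r => le_iSup_of_le (r - 1) (hcP (r - 1) r (by linarith))
  · -- R6
    rw [← top_le_iff, ← (hF 0).2]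
    subst hQ
    exact iSup_le fun q => le_iSup_of_le q (le_iSup_of_le 0 le_rfl)
end

section
/- Let L be a frame and let (u_n, v_n)_{n∈ℕ} be a sequence of measurable-function pairs on L (each satisfying (R1)–(R4)). Assume that for every p ∈ ℚ the join ⨆_{n∈ℕ} u_n p is a complemented element of L. Define P p := ⨆_{n∈ℕ} u_n p and Q q := ⨆_{r∈ℚ, r<q} (⨆_{n∈ℕ} u_n r)ᶜ. Then the pair (P, Q) satisfies (R1)–(R4) and is the least upper bound of the set {(u_n, v_n) : n ∈ ℕ} with respect to the order on pairs. Moreover, if every (u_n, v_n) also satisfies (R5)–(R6) and ⨆_{p∈ℚ} (⨆_{n∈ℕ} u_n p)ᶜ = ⊤, then (P, Q) satisfies (R5)–(R6). -/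
theorem countable_join_of_measPairs {L : Type*} [Order.Frame L]
    (u v : ℕ → ℚ → L) (hR : ∀ n, IsMeasPair (u n) (v n))
    (c : ℚ → L) (hc : ∀ p : ℚ, IsCompl (⨆ n, u n p) (c p))
    (P : ℚ → L) (hP : P = fun p => ⨆ n, u n p)
    (Q : ℚ → L) (hQ : Q = fun q => ⨆ r : ℚ, ⨆ _ : r < q, c r) :
    IsMeasPair P Q ∧
    (∀ n, PairLE (u n) (v n) P Q) ∧
    (∀ u' v' : ℚ → L, IsMeasPair u' v' → (∀ n, PairLE (u n) (v n) u' v') →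
      PairLE P Q u' v') ∧
    ((∀ n, IsFinitePair (u n) (v n)) → (⨆ p : ℚ, c p) = ⊤ → IsFinitePair P Q) := by
  subst hP hQ
  have hanti : ∀ n, ∀ p r : ℚ, r ≤ p → u n p ≤ u n r := by
    intro n p r hrp
    rcases eq_or_lt_of_le hrp with h | h
    · exact le_of_eq (by rw [h])
    · rw [(hR n).2.2.1 r]
      exact le_iSup₂ (f := fun s (_ : r < s) => u n s) p h
  have hPanti : ∀ p r : ℚ, r ≤ p → (⨆ n, u n p) ≤ ⨆ n, u n r :=
    fun p r h => iSup_mono fun n => hanti n p r h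
  have hcv : ∀ n (r q : ℚ), r < q → c r ≤ v n q := by
    intro n r q hrq
    have h1 : c r ⊓ u n r = ⊥ := by
      have h0 : c r ⊓ (⨆ m, u m r) = ⊥ := by rw [inf_comm]; exact (hc r).inf_eq_bot
      exact le_bot_iff.mp ((inf_le_inf_left _ (le_iSup (fun m => u m r) n)).trans h0.le)
    calc c r = c r ⊓ (u n r ⊔ v n q) := by rw [(hR n).2.1 r q hrq, inf_top_eq]
    _ = (c r ⊓ u n r) ⊔ (c r ⊓ v n q) := inf_sup_left _ _ _
    _ ≤ ⊥ ⊔ v n q := sup_le_sup h1.le inf_le_right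
    _ = v n q := bot_sup_eq _
  refine ⟨⟨?_, ?_, ?_, ?_⟩, ?_, ?_, ?_⟩
  · -- R1
    intro p q hqp
    rw [eq_bot_iff, inf_iSup_eq]
    refine iSup_le fun r => ?_
    rw [inf_iSup_eq]
    refine iSup_le fun hrq => ?_
    have : (⨆ n, u n p) ≤ ⨆ n, u n r := hPanti p r (hrq.le.trans hqp)
    calc (⨆ n, u n p) ⊓ c r ≤ (⨆ n, u n r) ⊓ c r := inf_le_inf_right _ this
    _ = ⊥ := (hc r).inf_eq_bot
  · -- R2
    intro p q hpq
    obtain ⟨r, hpr, hrq⟩ := exists_between hpq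
    rw [eq_top_iff, ← (hc r).sup_eq_top]
    exact sup_le_sup (hPanti r p hpr.le) (le_iSup₂ (f := fun s (_ : s < q) => c s) r hrq)
  · -- R3
    intro p
    apply le_antisymm
    · refine iSup_le fun n => ?_
      rw [(hR n).2.2.1 p]
      refine iSup₂_le fun r hr => ?_
      exact le_trans (le_iSup (fun m => u m r) n)
        (le_iSup₂ (f := fun r (_ : p < r) => ⨆ n, u n r) r hr)
    · exact iSup₂_le fun r hr => hPanti r p hr.le
  · -- R4
    intro q
    apply le_antisymm
    · refine iSup₂_le fun r hrq => ?_
      obtain ⟨s, hrs, hsq⟩ := exists_between hrq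
      refine le_trans (le_iSup₂ (f := fun t (_ : t < s) => c t) r hrs) ?_
      exact le_iSup₂ (f := fun s (_ : s < q) => ⨆ t : ℚ, ⨆ _ : t < s, c t) s hsq
    · refine iSup₂_le fun s hsq => iSup₂_le fun r hrs => ?_
      exact le_iSup₂ (f := fun t (_ : t < q) => c t) r (hrs.trans hsq)
  · -- upper bound
    intro n
    refine ⟨fun p => le_iSup (fun m => u m p) n, fun q => ?_⟩
    exact iSup₂_le fun r hrq => hcv n r q hrq
  · -- least
    intro u' v' h' hub
    refine ⟨fun p => iSup_le fun n => (hub n).1 p, fun q => ?_⟩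
    rw [h'.2.2.2 q]
    refine iSup₂_le fun s hsq => ?_
    obtain ⟨r, hsr, hrq⟩ := exists_between hsq
    have hd : v' s ⊓ (⨆ n, u n r) = ⊥ := by
      rw [inf_iSup_eq, eq_bot_iff]
      refine iSup_le fun n => ?_
      calc v' s ⊓ u n r ≤ v' s ⊓ u' r := inf_le_inf_left _ ((hub n).1 r)
      _ = u' r ⊓ v' s := inf_comm _ _
      _ = ⊥ := h'.1 r s hsr.le
    have : v' s ≤ c r := by
      calc v' s = v' s ⊓ ((⨆ n, u n r) ⊔ c r) := by rw [(hc r).sup_eq_top, inf_top_eq]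
      _ = (v' s ⊓ (⨆ n, u n r)) ⊔ (v' s ⊓ c r) := inf_sup_left _ _ _
      _ ≤ ⊥ ⊔ c r := sup_le_sup hd.le inf_le_right
      _ = c r := bot_sup_eq _
    exact le_trans this (le_iSup₂ (f := fun t (_ : t < q) => c t) r hrq)
  · -- finiteness
    intro hfin hctop
    constructor
    · rw [iSup_comm]
      simp only [fun n => (hfin n).1, iSup_const]
    · rw [eq_top_iff, ← hctop]
      refine iSup_le fun r => ?_
      refine le_trans (le_iSup₂ (f := fun t (_ : t < r + 1) => c t) r (by linarith)) ?_
      exact le_iSup (fun q => ⨆ t : ℚ, ⨆ _ : t < q, c t) (r + 1)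
end

section
/- Let L be a nontrivial frame (⊥ ≠ ⊤) and let f be a pair of maps ℚ → L such that f = Σ_{i=1}^{n} r_i·χ_{a_i} (componentwise equality of iterated sums of scaled characteristic pairs) for some rationals r_1, …, r_n and complemented elements a_1, …, a_n of L. Then there exist m ≥ 1, rationals s_1 < s_2 < ⋯ < s_m, and pairwise disjoint complemented elements b_1, …, b_m of L, each b_j ≠ ⊥, with b_1 ⊔ ⋯ ⊔ b_m = ⊤, such that f = Σ_{j=1}^{m} s_j·χ_{b_j}; i.e., every simple function admits a canonical form. -/
/-- A pair of maps `u, v : ℚ → L`, encoding a real-valued function on the frame `L`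
via `f(p,—) = u p`, `f(—,q) = v q`. -/
structure MP (L : Type*) where
  u : ℚ → L
  v : ℚ → L

namespace MP

variable {L : Type*} [Order.Frame L]

/-- The order on pairs: `f ≤ g` iff `u_f p ≤ u_g p` and `v_g q ≤ v_f q` for all rationals. -/
def le (f g : MP L) : Prop :=
  (∀ p : ℚ, f.u p ≤ g.u p) ∧ (∀ q : ℚ, g.v q ≤ f.v q)

/-- The sum of two pairs. -/
noncomputable def add (f g : MP L) : MP L where
  u := fun p => ⨆ t : ℚ, f.u t ⊓ g.u (p - t)
  v := fun q => ⨆ t : ℚ, f.v t ⊓ g.v (q - t)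

/-- The join of two pairs. -/
def sup (f g : MP L) : MP L where
  u := fun p => f.u p ⊔ g.u p
  v := fun q => f.v q ⊓ g.v q

/-- The negation of a pair. -/
def neg (f : MP L) : MP L where
  u := fun p => f.v (-p)
  v := fun q => f.u (-q)

end MP

/-- The zero pair `𝟎`. -/
noncomputable def zeroMP (L : Type*) [Order.Frame L] : MP L where
  u := fun p => if p < 0 then ⊤ else ⊥
  v := fun q => if q ≤ 0 then ⊥ else ⊤

/-- The scaled characteristic pair `r·χ_a`, for a rational `r` and a complemented
element `a` with complement `ac`. -/
noncomputable def sChi {L : Type*} [Order.Frame L] (r : ℚ) (a ac : L) : MP L where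
  u := fun p =>
    if 0 < r then (if p < 0 then ⊤ else if p < r then a else ⊥)
    else if r = 0 then (if p < 0 then ⊤ else ⊥)
    else (if p < r then ⊤ else if p < 0 then ac else ⊥)
  v := fun q =>
    if 0 < r then (if q ≤ 0 then ⊥ else if q ≤ r then ac else ⊤)
    else if r = 0 then (if q ≤ 0 then ⊥ else ⊤)
    else (if q ≤ r then ⊥ else if q ≤ 0 then a else ⊤)

/-- Iterated sum of a finite list of pairs. -/
noncomputable def sumMP {L : Type*} [Order.Frame L] : List (MP L) → MP L
  | [] => zeroMP L
  | [f] => f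
  | f :: g :: fs => f.add (sumMP (g :: fs))

section Aux
open Classical

variable {L : Type*} [Order.Frame L]

/-- indicator element -/
noncomputable def ind (L : Type*) [Order.Frame L] (P : Prop) : L := if P then ⊤ else ⊥

lemma ind_true {P : Prop} (h : P) : ind L P = ⊤ := if_pos h
lemma ind_false {P : Prop} (h : ¬ P) : ind L P = ⊥ := if_neg h

lemma ind_inf_ind (P Q : Prop) : ind L P ⊓ ind L Q = ind L (P ∧ Q) := by
  by_cases hP : P <;> by_cases hQ : Q <;>
    simp [ind_true, ind_false, hP, hQ]

lemma iSup_ind_lt (x y p : ℚ) :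
    (⨆ t : ℚ, ind L (t < x ∧ p - t < y)) = ind L (p < x + y) := by
  by_cases h : p < x + y
  · rw [ind_true h]
    have hxy : p - y < x := by linarith
    refine le_antisymm le_top ?_
    refine le_iSup_of_le ((p - y + x)/2) (le_of_eq ?_)
    symm; apply ind_true; constructor <;> linarith
  · rw [ind_false h]
    refine le_antisymm (iSup_le fun t => ?_) bot_le
    have : ¬ (t < x ∧ p - t < y) := by
      rintro ⟨h1, h2⟩; exact h (by linarith)
    rw [ind_false this]

/-- Step form of a pair w.r.t. a family of values+elements. -/
def StepForm (f : MP L) {ι : Type*} (s : ι → ℚ) (b : ι → L) : Prop :=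
  (∀ p : ℚ, f.u p = ⨆ i, b i ⊓ ind L (p < s i)) ∧
  (∀ q : ℚ, f.v q = ⨆ i, b i ⊓ ind L (s i < q))


lemma MP.ext' {f g : MP L} (hu : ∀ p, f.u p = g.u p) (hv : ∀ q, f.v q = g.v q) : f = g := by
  cases f; cases g
  simp only [MP.mk.injEq]
  exact ⟨funext hu, funext hv⟩

lemma StepForm.ext {f g : MP L} {ι : Type*} {s : ι → ℚ} {b : ι → L}
    (hf : StepForm f s b) (hg : StepForm g s b) : f = g :=
  MP.ext' (fun p => (hf.1 p).trans (hg.1 p).symm) (fun q => (hf.2 q).trans (hg.2 q).symm)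

lemma StepForm.add {f g : MP L} {ι κ : Type*} {s : ι → ℚ} {b : ι → L}
    {σ : κ → ℚ} {c : κ → L} (hf : StepForm f s b) (hg : StepForm g σ c) :
    StepForm (f.add g) (fun x : ι × κ => s x.1 + σ x.2) (fun x => b x.1 ⊓ c x.2) := by
  constructor
  · intro p
    show (⨆ t : ℚ, f.u t ⊓ g.u (p - t)) = _
    have key : ∀ t : ℚ, f.u t ⊓ g.u (p - t)
        = ⨆ x : ι × κ, (b x.1 ⊓ c x.2) ⊓ ind L (t < s x.1 ∧ p - t < σ x.2) := by
      intro t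
      rw [hf.1 t, hg.1 (p - t), iSup_inf_eq, iSup_prod]
      refine iSup_congr fun i => ?_
      rw [inf_iSup_eq]
      refine iSup_congr fun j => ?_
      rw [← ind_inf_ind, inf_inf_inf_comm]
    simp_rw [key]
    rw [iSup_comm]
    refine iSup_congr fun x => ?_
    rw [← inf_iSup_eq, iSup_ind_lt]
  · intro q
    show (⨆ t : ℚ, f.v t ⊓ g.v (q - t)) = _
    have key : ∀ t : ℚ, f.v t ⊓ g.v (q - t)
        = ⨆ x : ι × κ, (b x.1 ⊓ c x.2) ⊓ ind L (s x.1 < t ∧ σ x.2 < q - t) := by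
      intro t
      rw [hf.2 t, hg.2 (q - t), iSup_inf_eq, iSup_prod]
      refine iSup_congr fun i => ?_
      rw [inf_iSup_eq]
      refine iSup_congr fun j => ?_
      rw [← ind_inf_ind, inf_inf_inf_comm]
    simp_rw [key]
    rw [iSup_comm]
    refine iSup_congr fun x => ?_
    rw [← inf_iSup_eq]
    congr 1
    have : ∀ t : ℚ, (s x.1 < t ∧ σ x.2 < q - t) ↔ (-t < -(s x.1) ∧ (-q) - (-t) < -(σ x.2)) := by
      intro t; constructor <;> (rintro ⟨h1, h2⟩; constructor <;> linarith)
    calc (⨆ t : ℚ, ind L (s x.1 < t ∧ σ x.2 < q - t))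
        = ⨆ t : ℚ, ind L (-t < -(s x.1) ∧ (-q) - (-t) < -(σ x.2)) := by
          exact iSup_congr fun t => by rw [this t]
      _ = ⨆ t : ℚ, ind L (t < -(s x.1) ∧ (-q) - t < -(σ x.2)) :=
          (Equiv.neg ℚ).iSup_congr (fun t => rfl)
      _ = ind L (-q < -(s x.1) + -(σ x.2)) := iSup_ind_lt _ _ _
      _ = ind L (s x.1 + σ x.2 < q) := by
          congr 1; simp only [eq_iff_iff]; constructor <;> intro h <;> linarith

lemma sChi_u (r : ℚ) {a ac : L} (h : a ⊔ ac = ⊤) (p : ℚ) :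
    (sChi r a ac).u p = a ⊓ ind L (p < r) ⊔ ac ⊓ ind L (p < 0) := by
  show (if 0 < r then (if p < 0 then ⊤ else if p < r then a else ⊥)
    else if r = 0 then (if p < 0 then ⊤ else ⊥)
    else (if p < r then ⊤ else if p < 0 then ac else ⊥)) = _
  unfold ind
  split_ifs <;> first
    | (exfalso; linarith)
    | simp_all
    | (exfalso; apply absurd h; simp_all)

lemma sChi_v (r : ℚ) {a ac : L} (h : a ⊔ ac = ⊤) (q : ℚ) :
    (sChi r a ac).v q = a ⊓ ind L (r < q) ⊔ ac ⊓ ind L (0 < q) := by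
  show (if 0 < r then (if q ≤ 0 then ⊥ else if q ≤ r then ac else ⊤)
    else if r = 0 then (if q ≤ 0 then ⊥ else ⊤)
    else (if q ≤ r then ⊥ else if q ≤ 0 then a else ⊤)) = _
  unfold ind
  split_ifs <;> first
    | (exfalso; linarith)
    | simp_all
    | (exfalso; apply absurd h; simp_all)

lemma sChi_stepForm (r : ℚ) {a ac : L} (h : a ⊔ ac = ⊤) :
    StepForm (sChi r a ac) (fun t : Bool => if t then r else 0)
      (fun t : Bool => if t then a else ac) := by
  constructor
  · intro p
    rw [iSup_bool_eq, sChi_u r h p]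
    simp
  · intro q
    rw [iSup_bool_eq, sChi_v r h q]
    simp

lemma zero_stepForm : StepForm (zeroMP L) (fun _ : PUnit => (0:ℚ)) (fun _ => (⊤:L)) := by
  constructor
  · intro p
    show (if p < 0 then ⊤ else ⊥) = ⨆ _ : PUnit, ⊤ ⊓ ind L (p < 0)
    rw [iSup_const, top_inf_eq]
    by_cases hp : p < 0 <;> simp [hp, ind]
  · intro q
    show (if q ≤ 0 then ⊥ else ⊤) = ⨆ _ : PUnit, ⊤ ⊓ ind L ((0:ℚ) < q)
    rw [iSup_const, top_inf_eq]
    by_cases hq : q ≤ 0 <;> simp [hq, ind, not_lt.mpr, lt_of_not_ge]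

/-- A complemented partition indexed by `ι`. -/
def Partn {ι : Type*} (b bc : ι → L) : Prop :=
  (∀ i, IsCompl (b i) (bc i)) ∧ (∀ i i', i ≠ i' → b i ⊓ b i' = ⊥) ∧ (⨆ i, b i) = ⊤

lemma Partn.prod {ι κ : Type*} {b bc : ι → L} {c cc : κ → L}
    (hb : Partn b bc) (hc : Partn c cc) :
    Partn (fun x : ι × κ => b x.1 ⊓ c x.2) (fun x => bc x.1 ⊔ cc x.2) := by
  obtain ⟨hb1, hb2, hb3⟩ := hb
  obtain ⟨hc1, hc2, hc3⟩ := hc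
  refine ⟨fun x => (hb1 x.1).inf_sup (hc1 x.2), ?_, ?_⟩
  · rintro ⟨i, j⟩ ⟨i', j'⟩ hne
    refine le_bot_iff.mp ?_
    rcases ne_or_eq i i' with hii | rfl
    · calc (b i ⊓ c j) ⊓ (b i' ⊓ c j') ≤ b i ⊓ b i' := inf_le_inf inf_le_left inf_le_left
        _ ≤ ⊥ := (hb2 i i' hii).le
    · have hjj : j ≠ j' := by rintro rfl; exact hne rfl
      calc (b i ⊓ c j) ⊓ (b i ⊓ c j') ≤ c j ⊓ c j' := inf_le_inf inf_le_right inf_le_right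
        _ ≤ ⊥ := (hc2 j j' hjj).le
  · rw [iSup_prod]
    have h1 : (⨆ i, ⨆ j, b i ⊓ c j) = ⨆ i, b i :=
      iSup_congr fun i => by rw [← inf_iSup_eq, hc3, inf_top_eq]
    rw [h1, hb3]

lemma Partn.bool {a ac : L} (ha : IsCompl a ac) :
    Partn (fun t : Bool => if t then a else ac) (fun t : Bool => if t then ac else a) := by
  refine ⟨?_, ?_, ?_⟩
  · intro t; cases t <;> simp [ha, ha.symm]
  · intro t t' h
    cases t <;> cases t' <;> simp_all [inf_comm, ha.inf_eq_bot, disjoint_iff.mp ha.disjoint,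
      disjoint_iff.mp ha.symm.disjoint]
  · rw [iSup_bool_eq]
    simpa using codisjoint_iff.mp ha.codisjoint

lemma Partn.punit : Partn (fun _ : PUnit => (⊤:L)) (fun _ => (⊥:L)) := by
  refine ⟨fun _ => isCompl_top_bot, fun i i' h => absurd (Subsingleton.elim i i') h, ?_⟩
  rw [iSup_const]

lemma sumMP_cons {x : MP L} {l : List (MP L)} (h : l ≠ []) :
    sumMP (x :: l) = x.add (sumMP l) := by
  cases l with
  | nil => exact absurd rfl h
  | cons y ys => rfl

lemma main_stepForm : ∀ (n : ℕ) (r : Fin n → ℚ) (a ac : Fin n → L),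
    (∀ i, IsCompl (a i) (ac i)) →
    ∃ (ι : Type) (_ : Fintype ι) (s : ι → ℚ) (b bc : ι → L),
      StepForm (sumMP (List.ofFn fun i => sChi (r i) (a i) (ac i))) s b ∧ Partn b bc := by
  intro n
  induction n with
  | zero =>
    intro r a ac _
    refine ⟨PUnit, inferInstance, fun _ => 0, fun _ => ⊤, fun _ => ⊥, ?_, Partn.punit⟩
    rw [List.ofFn_zero]
    exact zero_stepForm
  | succ n ih =>
    intro r a ac ha
    cases n with
    | zero =>
      refine ⟨Bool, inferInstance, fun t : Bool => if t then r 0 else 0,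
        fun t : Bool => if t then a 0 else ac 0, fun t : Bool => if t then ac 0 else a 0,
        ?_, Partn.bool (ha 0)⟩
      have : (List.ofFn fun i : Fin 1 => sChi (r i) (a i) (ac i)) = [sChi (r 0) (a 0) (ac 0)] := by
        simp [List.ofFn_succ]
      rw [this]
      exact sChi_stepForm (r 0) (codisjoint_iff.mp (ha 0).codisjoint)
    | succ k =>
      obtain ⟨ι, fint, s, b, bc, hsf, hp⟩ :=
        ih (fun i => r i.succ) (fun i => a i.succ) (fun i => ac i.succ) (fun i => ha i.succ)
      rw [List.ofFn_succ, sumMP_cons (by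
        intro h
        have := congrArg List.length h
        simp at this)]
      refine ⟨Bool × ι, @instFintypeProd _ _ _ fint, _, _, _,
        (sChi_stepForm (r 0) (codisjoint_iff.mp (ha 0).codisjoint)).add hsf,
        (Partn.bool (ha 0)).prod hp⟩

lemma iSup_inf_iSup_eq_bot {ι κ : Type*} {f : ι → L} {g : κ → L}
    (h : ∀ i k, f i ⊓ g k = ⊥) : (⨆ i, f i) ⊓ (⨆ k, g k) = ⊥ := by
  rw [iSup_inf_eq, iSup_eq_bot]
  intro i
  rw [inf_iSup_eq, iSup_eq_bot]
  intro k
  exact h i k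

lemma extract (hL : (⊥:L) ≠ ⊤) {ι : Type} [Fintype ι] {s : ι → ℚ} {b bc : ι → L}
    {f : MP L} (hsf : StepForm f s b) (hp : Partn b bc) :
    ∃ (m : ℕ) (s' : Fin m → ℚ) (B Bc : Fin m → L),
      0 < m ∧ StrictMono s' ∧ Partn B Bc ∧
      (∀ j j', j ≠ j' → B j ⊓ B j' = ⊥) ∧ (∀ j, B j ≠ ⊥) ∧ (⨆ j, B j) = ⊤ ∧
      StepForm f s' B := by
  classical
  set V : Finset ℚ := (Finset.univ.filter fun i => b i ≠ ⊥).image s with hV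
  have hmemV : ∀ c, c ∈ V ↔ ∃ i, b i ≠ ⊥ ∧ s i = c := by
    intro c; simp [hV]
  have hVne : V.Nonempty := by
    by_contra h
    have hball : ∀ i, b i = ⊥ := by
      intro i; by_contra hb
      exact h ⟨s i, (hmemV (s i)).mpr ⟨i, hb, rfl⟩⟩
    have : (⊤:L) = ⊥ := by rw [← hp.2.2]; simp [hball]
    exact hL this.symm
  set e := V.orderIsoOfFin rfl with he
  set s' : Fin V.card → ℚ := fun j => (e j : ℚ) with hs'
  have hs'mono : StrictMono s' := fun j j' h => Subtype.coe_lt_coe.mpr (e.strictMono h)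
  set B : Fin V.card → L := fun j => ⨆ i, if s i = s' j then b i else ⊥ with hB
  set Bc : Fin V.card → L := fun j => ⨆ i, if s i = s' j then ⊥ else b i with hBc
  have hBle : ∀ i j, s i = s' j → b i ≤ B j := fun i j h =>
    le_iSup_of_le i (by rw [if_pos h])
  have hdisj : ∀ j j', j ≠ j' → B j ⊓ B j' = ⊥ := by
    intro j j' hjj
    have hne : s' j ≠ s' j' := fun h => hjj (hs'mono.injective h)
    rw [hB]
    refine iSup_inf_iSup_eq_bot fun i i' => ?_
    by_cases h1 : s i = s' j
    · by_cases h2 : s i' = s' j'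
      · have : i ≠ i' := by rintro rfl; rw [h1] at h2; exact hne h2
        rw [if_pos h1, if_pos h2]; exact hp.2.1 i i' this
      · rw [if_neg h2, inf_bot_eq]
    · rw [if_neg h1, bot_inf_eq]
  have hcompl : ∀ j, IsCompl (B j) (Bc j) := by
    intro j
    rw [isCompl_iff, disjoint_iff, codisjoint_iff]
    constructor
    · rw [hB, hBc]
      refine iSup_inf_iSup_eq_bot fun i i' => ?_
      by_cases h1 : s i = s' j
      · by_cases h2 : s i' = s' j
        · rw [if_pos h2, inf_bot_eq]
        · have : i ≠ i' := by rintro rfl; exact h2 h1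
          rw [if_pos h1, if_neg h2]; exact hp.2.1 i i' this
      · rw [if_neg h1, bot_inf_eq]
    · rw [hB, hBc, ← iSup_sup_eq, ← hp.2.2]
      refine iSup_congr fun i => ?_
      by_cases h1 : s i = s' j <;> simp [h1]
  have hnonbot : ∀ j, B j ≠ ⊥ := by
    intro j hbot
    have hmem : (s' j) ∈ V := (e j).2
    obtain ⟨i, hbi, hsi⟩ := (hmemV _).mp hmem
    exact hbi (le_bot_iff.mp (hbot ▸ hBle i j hsi))
  have htop : (⨆ j, B j) = ⊤ := by
    refine le_antisymm le_top ?_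
    rw [← hp.2.2]
    refine iSup_le fun i => ?_
    by_cases hbi : b i = ⊥
    · rw [hbi]; exact bot_le
    · have hmem : s i ∈ V := (hmemV _).mpr ⟨i, hbi, rfl⟩
      set j := e.symm ⟨s i, hmem⟩ with hj
      have hsj : s i = s' j := by rw [hs', hj]; simp
      exact le_trans (hBle i j hsj) (le_iSup _ j)
  have group : ∀ (P : ℚ → Prop), (⨆ i, b i ⊓ ind L (P (s i))) = ⨆ j, B j ⊓ ind L (P (s' j)) := by
    intro P
    refine le_antisymm (iSup_le fun i => ?_) (iSup_le fun j => ?_)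
    · by_cases hbi : b i = ⊥
      · rw [hbi, bot_inf_eq]; exact bot_le
      · have hmem : s i ∈ V := (hmemV _).mpr ⟨i, hbi, rfl⟩
        set j := e.symm ⟨s i, hmem⟩ with hj
        have hsj : s i = s' j := by rw [hs', hj]; simp
        refine le_iSup_of_le j (inf_le_inf (hBle i j hsj) (le_of_eq ?_))
        rw [hsj]
    · rw [hB]
      simp only [iSup_inf_eq]
      refine iSup_le fun i => ?_
      by_cases h1 : s i = s' j
      · rw [if_pos h1, ← h1]
        exact le_iSup (fun i => b i ⊓ ind L (P (s i))) i
      · rw [if_neg h1, bot_inf_eq]; exact bot_le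
  refine ⟨V.card, s', B, Bc, Finset.card_pos.mpr hVne, hs'mono,
    ⟨hcompl, hdisj, htop⟩, hdisj, hnonbot, htop, ?_, ?_⟩
  · intro p; rw [hsf.1 p]; exact group (fun c => p < c)
  · intro q; rw [hsf.2 q]; exact group (fun c => c < q)

lemma canon_stepForm : ∀ (m : ℕ) (s : Fin m → ℚ) (B Bc : Fin m → L),
    (∀ j, IsCompl (B j) (Bc j)) → (∀ j j', j ≠ j' → B j ⊓ B j' = ⊥) →
    StepForm (sumMP (List.ofFn fun j => sChi (s j) (B j) (Bc j)))
      (fun o : Option (Fin m) => o.elim 0 s)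
      (fun o : Option (Fin m) => o.elim (⨅ j, Bc j) B) := by
  intro m
  induction m with
  | zero =>
    intro s B Bc _ _
    rw [List.ofFn_zero]
    have hz : StepForm (zeroMP L) (fun _ : PUnit.{1} => (0:ℚ)) (fun _ => (⊤:L)) := zero_stepForm
    have hzz : sumMP ([] : List (MP L)) = zeroMP L := rfl
    rw [hzz]
    constructor
    · intro p
      rw [hz.1 p, iSup_option]
      simp
    · intro q
      rw [hz.2 q, iSup_option]
      simp
  | succ m ih =>
    intro s B Bc hcompl hdisj
    have hBBc : ∀ j j', j ≠ j' → B j ≤ Bc j' := by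
      intro j j' h
      have h1 := codisjoint_iff.mp (hcompl j').codisjoint
      calc B j = B j ⊓ (B j' ⊔ Bc j') := by rw [h1, inf_top_eq]
        _ = (B j ⊓ B j') ⊔ (B j ⊓ Bc j') := inf_sup_left _ _ _
        _ = B j ⊓ Bc j' := by rw [hdisj j j' h, bot_sup_eq]
        _ ≤ Bc j' := inf_le_right
    cases m with
    | zero =>
      have hform := sChi_stepForm (s 0) (codisjoint_iff.mp (hcompl 0).codisjoint)
      have hlist : (List.ofFn fun j : Fin 1 => sChi (s j) (B j) (Bc j))
          = [sChi (s 0) (B 0) (Bc 0)] := by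
        simp [List.ofFn_succ]
      rw [hlist]
      have hone : sumMP [sChi (s 0) (B 0) (Bc 0)] = sChi (s 0) (B 0) (Bc 0) := rfl
      rw [hone]
      constructor
      · intro p
        rw [hform.1 p, iSup_option, iSup_bool_eq]
        simp [iSup_unique, iInf_unique, sup_comm]
      · intro q
        rw [hform.2 q, iSup_option, iSup_bool_eq]
        simp [iSup_unique, iInf_unique, sup_comm]
    | succ k =>
      have A1 : (⨅ j : Fin (k+2), Bc j) = Bc 0 ⊓ ⨅ j : Fin (k+1), Bc j.succ := by
        refine le_antisymm (le_inf (iInf_le _ 0) (le_iInf fun j => iInf_le _ j.succ))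
          (le_iInf fun j => ?_)
        exact Fin.cases inf_le_left (fun i => le_trans inf_le_right (iInf_le _ i)) j
      have A2 : B 0 ⊓ (⨅ j : Fin (k+1), Bc j.succ) = B 0 :=
        inf_eq_left.mpr (le_iInf fun j => hBBc 0 j.succ (Fin.succ_ne_zero j).symm)
      have A3 : ∀ j : Fin (k+1), Bc 0 ⊓ B j.succ = B j.succ :=
        fun j => inf_eq_right.mpr (hBBc j.succ 0 (Fin.succ_ne_zero j))
      have A4 : ∀ j : Fin (k+1), B 0 ⊓ B j.succ = ⊥ :=
        fun j => hdisj 0 j.succ (Fin.succ_ne_zero j).symm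
      have htail := ih (fun j => s j.succ) (fun j => B j.succ) (fun j => Bc j.succ)
        (fun j => hcompl j.succ)
        (fun j j' h => hdisj _ _ (by simpa [Fin.succ_inj] using h))
      have hhead := sChi_stepForm (s 0) (codisjoint_iff.mp (hcompl 0).codisjoint)
      have hadd := hhead.add htail
      have hlist : (List.ofFn fun j : Fin (k+2) => sChi (s j) (B j) (Bc j))
          = sChi (s 0) (B 0) (Bc 0) :: (List.ofFn fun j : Fin (k+1) =>
              sChi (s j.succ) (B j.succ) (Bc j.succ)) := by
        rw [List.ofFn_succ]
      have main : ∀ (P : ℚ → Prop),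
          (⨆ x : Bool × Option (Fin (k+1)),
            ((if x.1 then B 0 else Bc 0) ⊓
              (x.2.elim (⨅ j : Fin (k+1), Bc j.succ) (fun j => B j.succ)))
              ⊓ ind L (P ((if x.1 then s 0 else 0) + x.2.elim 0 (fun j => s j.succ))))
          = ⨆ o : Option (Fin (k+2)),
              (o.elim (⨅ j, Bc j) B) ⊓ ind L (P (o.elim 0 s)) := by
        intro P
        refine le_antisymm (iSup_le ?_) (iSup_le ?_)
        · rintro ⟨t, o⟩
          cases t
          · cases o with
            | none =>
              refine le_iSup_of_le none (le_of_eq ?_)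
              simp [A1]
            | some j =>
              refine le_iSup_of_le (some j.succ) (le_of_eq ?_)
              simp only [Option.elim_none, Option.elim_some, eq_self_iff_true, if_true,
                Bool.false_eq_true, if_false, add_zero, zero_add]
              rw [A3 j]
          · cases o with
            | none =>
              refine le_iSup_of_le (some 0) (le_of_eq ?_)
              simp only [Option.elim_none, Option.elim_some, eq_self_iff_true, if_true,
                Bool.false_eq_true, if_false, add_zero, zero_add]
              rw [A2]
            | some j =>
              refine le_trans (le_of_eq ?_) (bot_le :
                (⊥:L) ≤ ⨆ o : Option (Fin (k+2)), (o.elim (⨅ j, Bc j) B) ⊓ ind L (P (o.elim 0 s)))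
              simp only [Option.elim_none, Option.elim_some, eq_self_iff_true, if_true,
                Bool.false_eq_true, if_false, add_zero, zero_add]
              rw [A4 j, bot_inf_eq]
        · intro o
          cases o with
          | none =>
            refine le_iSup_of_le ((false, none) : Bool × Option (Fin (k+1))) (le_of_eq ?_)
            simp [A1]
          | some j =>
            refine Fin.cases ?_ (fun i => ?_) j
            · refine le_iSup_of_le ((true, none) : Bool × Option (Fin (k+1))) (le_of_eq ?_)
              simp only [Option.elim_none, Option.elim_some, eq_self_iff_true, if_true,
                Bool.false_eq_true, if_false, add_zero, zero_add]
              rw [A2]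
            · refine le_iSup_of_le ((false, some i) : Bool × Option (Fin (k+1))) (le_of_eq ?_)
              simp only [Option.elim_none, Option.elim_some, eq_self_iff_true, if_true,
                Bool.false_eq_true, if_false, add_zero, zero_add]
              rw [A3 i]
      rw [hlist, sumMP_cons (by
        intro h
        have := congrArg List.length h
        simp at this)]
      constructor
      · intro p
        rw [hadd.1 p]
        exact main (fun c => p < c)
      · intro q
        rw [hadd.2 q]
        exact main (fun c => c < q)

end Aux

/-- Every simple function on a nontrivial frame admits a canonical form: a representation
`Σ s_j·χ_{b_j}` with strictly increasing rational coefficients and pairwise disjoint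
nonzero complemented elements whose join is `⊤`. -/
theorem exists_canonical_form {L : Type*} [Order.Frame L] (hL : (⊥ : L) ≠ ⊤)
    (n : ℕ) (r : Fin n → ℚ) (a ac : Fin n → L) (ha : ∀ i, IsCompl (a i) (ac i))
    (f : MP L) (hf : f = sumMP (List.ofFn fun i => sChi (r i) (a i) (ac i))) :
    ∃ (m : ℕ) (s : Fin m → ℚ) (b bc : Fin m → L),
      0 < m ∧ StrictMono s ∧ (∀ j, IsCompl (b j) (bc j)) ∧
      (∀ j j', j ≠ j' → b j ⊓ b j' = ⊥) ∧ (∀ j, b j ≠ ⊥) ∧ (⨆ j, b j) = ⊤ ∧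
      f = sumMP (List.ofFn fun j => sChi (s j) (b j) (bc j)) := by
  obtain ⟨ι, fint, s0, b0, bc0, hsf0, hp0⟩ := main_stepForm n r a ac ha
  haveI := fint
  rw [← hf] at hsf0
  obtain ⟨m, s', B, Bc, hm, hmono, hP, hdisj, hnonbot, htop, hsf⟩ := extract hL hsf0 hp0
  have hbotinf : (⨅ j, Bc j) = ⊥ := by
    refine le_bot_iff.mp ?_
    have h2 : (⨅ j, Bc j) = (⨅ j, Bc j) ⊓ ⨆ j, B j := by rw [htop, inf_top_eq]
    rw [h2, inf_iSup_eq]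
    refine iSup_le fun j => ?_
    calc (⨅ j', Bc j') ⊓ B j ≤ Bc j ⊓ B j := inf_le_inf (iInf_le _ j) le_rfl
      _ = ⊥ := by rw [inf_comm]; exact disjoint_iff.mp (hP.1 j).disjoint
  have hsf' : StepForm f (fun o : Option (Fin m) => o.elim 0 s')
      (fun o => o.elim (⨅ j, Bc j) B) := by
    constructor
    · intro p
      rw [hsf.1 p, iSup_option]
      simp [hbotinf]
    · intro q
      rw [hsf.2 q, iSup_option]
      simp [hbotinf]
  have hc := canon_stepForm m s' B Bc hP.1 hdisj
  exact ⟨m, s', B, Bc, hm, hmono, hP.1, hdisj, hnonbot, htop, hsf'.ext hc⟩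
end

section
/- Let L be a frame. Let r_1, …, r_n and s_1, …, s_m be rationals, let a_1, …, a_n be pairwise disjoint complemented elements of L with a_1 ⊔ ⋯ ⊔ a_n = ⊤, and let b_1, …, b_m be pairwise disjoint complemented elements of L with b_1 ⊔ ⋯ ⊔ b_m = ⊤. Then (Σ_{i=1}^{n} r_i·χ_{a_i}) + (Σ_{j=1}^{m} s_j·χ_{b_j}) = Σ_{i=1}^{n} Σ_{j=1}^{m} (r_i + s_j)·χ_{a_i ⊓ b_j} (componentwise equality of pairs). In particular, the sum of two measurable simple functions is simple. -/
open Function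

theorem iSup_inf_iSup_eq_iSup_exists {L X ι κ : Type*} [Order.Frame L]
    (P : X → ι → Prop) (Q : X → κ → Prop) (c : ι → L) (d : κ → L) :
    ⨆ x : X, (⨆ (i) (_ : P x i), c i) ⊓ ⨆ (j) (_ : Q x j), d j =
      ⨆ (i) (j) (_ : ∃ x, P x i ∧ Q x j), c i ⊓ d j := by
  refine le_antisymm (iSup_le fun x => ?_) ?_
  · rw [iSup₂_inf_eq]
    refine iSup₂_le fun i hi => ?_
    rw [inf_iSup₂_eq]
    exact iSup₂_le fun j hj => le_iSup₂_of_le i j (le_iSup_of_le ⟨x, hi, hj⟩ le_rfl)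
  · exact iSup₂_le fun i j => iSup_le fun ⟨x, hi, hj⟩ =>
      le_iSup_of_le x (inf_le_inf (le_iSup₂_of_le i hi le_rfl) (le_iSup₂_of_le j hj le_rfl))

theorem iSup_le_iSup_of_le_iSup_eq {α ι ι' β : Type*} [CompleteLattice α] {c : ι → α}
    {t : ι → β} {c' : ι' → α} {t' : ι' → β} (h : ∀ i, c i ≤ ⨆ (i') (_ : t' i' = t i), c' i')
    (P : β → Prop) : ⨆ (i) (_ : P (t i)), c i ≤ ⨆ (i') (_ : P (t' i')), c' i' :=
  iSup₂_le fun i hi => (h i).trans <| iSup₂_le fun i' he => le_iSup₂_of_le i' (he ▸ hi) le_rfl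

section

variable {K : Type*} [Field K] [LinearOrder K] [IsStrictOrderedRing K]

theorem exists_lt_and_sub_lt_iff {A B p : K} : (∃ x, x < A ∧ p - x < B) ↔ p < A + B := by
  refine ⟨fun ⟨x, h₁, h₂⟩ => by linarith, fun h => ?_⟩
  obtain ⟨x, h₁, h₂⟩ := exists_between (show p - B < A by linarith)
  exact ⟨x, h₂, by linarith⟩

theorem exists_lt_and_lt_sub_iff {A B q : K} : (∃ x, A < x ∧ B < q - x) ↔ A + B < q := by
  refine ⟨fun ⟨x, h₁, h₂⟩ => by linarith, fun h => ?_⟩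
  obtain ⟨x, h₁, h₂⟩ := exists_between (show A < q - B by linarith)
  exact ⟨x, h₁, by linarith⟩

end

theorem iInf_eq_of_isCompl_iSup {L ι : Type*} [Order.Frame L] {x y : ι → L} {e : L}
    (h : ∀ i, IsCompl (x i) (y i)) (he : IsCompl (⨆ i, x i) e) : ⨅ i, y i = e := by
  simp_rw [← (h _).compl_eq, ← he.compl_eq, ← himp_bot, iSup_himp_eq]

namespace MP

variable {L : Type*} [Order.Frame L]

attribute [ext] MP

/-- The pair of the simple function taking the value `t i` on the piece `c i`. -/
def simple {ι : Type*} (c : ι → L) (t : ι → ℚ) : MP L where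
  u p := ⨆ (i) (_ : p < t i), c i
  v q := ⨆ (i) (_ : t i < q), c i

theorem simple_add {ι κ : Type*} (c : ι → L) (t : ι → ℚ) (d : κ → L) (s : κ → ℚ) :
    (simple c t).add (simple d s) =
      simple (fun z : ι × κ => c z.1 ⊓ d z.2) (fun z => t z.1 + s z.2) := by
  ext p
  · simp only [add, simple, exists_lt_and_sub_lt_iff, iSup_prod,
      iSup_inf_iSup_eq_iSup_exists (fun x i => x < t i) (fun x j => p - x < s j)]
  · simp only [add, simple, exists_lt_and_lt_sub_iff, iSup_prod,
      iSup_inf_iSup_eq_iSup_exists (fun x i => t i < x) (fun x j => s j < p - x)]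

theorem zeroMP_eq_simple : zeroMP L = simple (fun _ : Unit => ⊤) (fun _ => 0) := by
  ext p
  · simp [zeroMP, simple, iSup_eq_if]
  · simp [zeroMP, simple, iSup_eq_if, ← not_le, ite_not]

theorem simple_eq_simple {ι ι' : Type*} {c : ι → L} {t : ι → ℚ} {c' : ι' → L} {t' : ι' → ℚ}
    (h : ∀ i, c i ≤ ⨆ (i') (_ : t' i' = t i), c' i')
    (h' : ∀ i', c' i' ≤ ⨆ (i) (_ : t i = t' i'), c i) : simple c t = simple c' t' := by
  ext p
  · exact le_antisymm (iSup_le_iSup_of_le_iSup_eq h (p < ·))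
      (iSup_le_iSup_of_le_iSup_eq h' (p < ·))
  · exact le_antisymm (iSup_le_iSup_of_le_iSup_eq h (· < p))
      (iSup_le_iSup_of_le_iSup_eq h' (· < p))

theorem simple_add_zero {ι : Type*} (c : ι → L) (t : ι → ℚ) :
    (simple c t).add (zeroMP L) = simple c t := by
  rw [zeroMP_eq_simple, simple_add]
  exact simple_eq_simple (fun z => le_iSup₂_of_le z.1 (add_zero _).symm inf_le_left)
    (fun i => le_iSup₂_of_le (i, ()) (add_zero _) (by simp))

theorem sumMP_cons {f : MP L} (hf : f.add (zeroMP L) = f) (l : List (MP L)) :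
    sumMP (f :: l) = f.add (sumMP l) := by
  cases l with
  | nil => exact hf.symm
  | cons g l => rfl

/-- `simple x τ`, extended by the value `0` on the piece `e`. -/
def simpleZeroOn {κ : Type*} (e : L) (x : κ → L) (τ : κ → ℚ) : MP L :=
  simple (fun o : Option κ => o.elim e x) (fun o => o.elim 0 τ)

theorem simpleZeroOn_bot {κ : Type*} (x : κ → L) (τ : κ → ℚ) :
    simpleZeroOn ⊥ x τ = simple x τ :=
  simple_eq_simple (fun o => o.rec bot_le fun k => le_iSup₂_of_le k rfl le_rfl)
    (fun k => le_iSup₂_of_le (some k) rfl le_rfl)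

theorem sChi_eq_simpleZeroOn (r : ℚ) {a ac : L} (h : Codisjoint a ac) :
    sChi r a ac = simpleZeroOn ac (fun _ : Unit => a) (fun _ => r) := by
  have h' : ac ⊔ a = ⊤ := h.symm.eq_top
  ext p
  · simp only [sChi, simpleZeroOn, simple, iSup_option, Option.elim, iSup_const, iSup_eq_if]
    split_ifs <;> first | rfl | (exfalso; linarith) | simp [h']
  · simp only [sChi, simpleZeroOn, simple, iSup_option, Option.elim, iSup_const, iSup_eq_if]
    split_ifs <;> first | rfl | (exfalso; linarith) | simp [h']

theorem sumMP_ofFn_simpleZeroOn {κ : Type*} {n : ℕ} {a ac : Fin n → L}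
    (ha : ∀ i, Codisjoint (a i) (ac i)) (hd : Pairwise (Disjoint on a)) (x : Fin n → κ → L)
    (τ : Fin n → κ → ℚ) (hx : ∀ i k, x i k ≤ a i) :
    sumMP (List.ofFn fun i => simpleZeroOn (ac i) (x i) (τ i)) =
      simpleZeroOn (⨅ i, ac i) (uncurry x) (uncurry τ) := by
  induction n with
  | zero =>
    show zeroMP L = _
    rw [zeroMP_eq_simple]
    exact simple_eq_simple (fun _ => le_iSup₂_of_le none rfl (by simp))
      (fun o => o.rec (le_iSup₂_of_le () rfl le_top) fun z => z.1.elim0)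
  | succ n ih =>
    have hx_le : ∀ {i j} k, i ≠ j → x i k ≤ ac j := fun k hij =>
      (hx _ k).trans ((hd hij).le_of_codisjoint (ha _))
    rw [List.ofFn_succ, sumMP_cons (f := simpleZeroOn _ _ _) (simple_add_zero _ _),
      ih (fun i => ha i.succ) (hd.comp_of_injective (Fin.succ_injective n)) _ _ fun i => hx i.succ,
      simpleZeroOn, simpleZeroOn, simpleZeroOn, simple_add]
    -- A piece of one summand lies in the complements of the others and misses their pieces.
    refine simple_eq_simple ?_ ?_
    · rintro ⟨_ | k, _ | ⟨i, l⟩⟩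
      · refine le_iSup₂_of_le none (add_zero _).symm (le_iInf fun i => ?_)
        exact Fin.cases inf_le_left (fun i => inf_le_right.trans (iInf_le _ i)) i
      · exact le_iSup₂_of_le (some (i.succ, l)) (zero_add _).symm inf_le_right
      · exact le_iSup₂_of_le (some (0, k)) (add_zero _).symm inf_le_left
      · exact ((inf_le_inf (hx 0 k) (hx i.succ l)).trans
          (hd (Fin.succ_ne_zero i).symm).le_bot).trans bot_le
    · rintro (_ | ⟨i, k⟩)
      · exact le_iSup₂_of_le (none, none) (add_zero _)
          (le_inf (iInf_le _ 0) (le_iInf fun i => iInf_le _ _))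
      · cases i using Fin.cases with
        | zero =>
          exact le_iSup₂_of_le (some k, none) (add_zero _)
            (le_inf le_rfl (le_iInf fun i => hx_le k (Fin.succ_ne_zero i).symm))
        | succ i =>
          exact le_iSup₂_of_le (none, some (i, k)) (zero_add _)
            (le_inf (hx_le k (Fin.succ_ne_zero i)) le_rfl)

theorem sumMP_ofFn_sChi {n : ℕ} (r : Fin n → ℚ) {a ac : Fin n → L}
    (ha : ∀ i, Codisjoint (a i) (ac i)) (hd : Pairwise (Disjoint on a)) :
    sumMP (List.ofFn fun i => sChi (r i) (a i) (ac i)) = simpleZeroOn (⨅ i, ac i) a r := by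
  simp_rw [sChi_eq_simpleZeroOn _ (ha _)]
  rw [sumMP_ofFn_simpleZeroOn ha hd _ _ fun _ _ => le_rfl]
  exact simple_eq_simple
    (fun o => o.rec (le_iSup₂_of_le none rfl le_rfl) fun z => le_iSup₂_of_le (some z.1) rfl le_rfl)
    (fun o => o.rec (le_iSup₂_of_le none rfl le_rfl) fun i =>
      le_iSup₂_of_le (some (i, ())) rfl le_rfl)

end MP

open MP

/-- The sum of two simple functions given by representations with pairwise disjoint
complemented elements covering `⊤` is the simple function
`Σ_i Σ_j (r_i + s_j)·χ_{a_i ⊓ b_j}`; in particular the sum of two measurable simple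
functions is simple. -/
theorem add_simple_eq_double_sum {L : Type*} [Order.Frame L] (n m : ℕ)
    (r : Fin n → ℚ) (s : Fin m → ℚ)
    (a ac : Fin n → L) (ha : ∀ i, IsCompl (a i) (ac i))
    (hadisj : ∀ i j, i ≠ j → a i ⊓ a j = ⊥) (hacov : (⨆ i, a i) = ⊤)
    (b bc : Fin m → L) (hb : ∀ j, IsCompl (b j) (bc j))
    (hbdisj : ∀ i j, i ≠ j → b i ⊓ b j = ⊥) (hbcov : (⨆ j, b j) = ⊤) :
    (sumMP (List.ofFn fun i => sChi (r i) (a i) (ac i))).add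
        (sumMP (List.ofFn fun j => sChi (s j) (b j) (bc j))) =
      sumMP (List.ofFn fun i => sumMP (List.ofFn fun j =>
        sChi (r i + s j) (a i ⊓ b j) (ac i ⊔ bc j))) := by
  have hadisj' : Pairwise (Disjoint on a) := fun i j hij => disjoint_iff.2 (hadisj i j hij)
  have hbdisj' : Pairwise (Disjoint on b) := fun i j hij => disjoint_iff.2 (hbdisj i j hij)
  have hac : ⨅ i, ac i = ⊥ := iInf_eq_of_isCompl_iSup ha (hacov ▸ isCompl_top_bot)
  have hbc : ⨅ j, bc j = ⊥ := iInf_eq_of_isCompl_iSup hb (hbcov ▸ isCompl_top_bot)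
  have row (i : Fin n) : sumMP (List.ofFn fun j => sChi (r i + s j) (a i ⊓ b j) (ac i ⊔ bc j)) =
      simpleZeroOn (ac i) (fun j => a i ⊓ b j) (fun j => r i + s j) := by
    have hrow : ⨆ j, a i ⊓ b j = a i := by rw [← inf_iSup_eq, hbcov, inf_top_eq]
    rw [sumMP_ofFn_sChi _ (fun j => ((ha i).inf_sup (hb j)).codisjoint)
      (hbdisj'.mono fun j k => Disjoint.mono inf_le_right inf_le_right),
      iInf_eq_of_isCompl_iSup (fun j => (ha i).inf_sup (hb j)) (hrow ▸ ha i)]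
  rw [sumMP_ofFn_sChi r (fun i => (ha i).codisjoint) hadisj',
    sumMP_ofFn_sChi s (fun j => (hb j).codisjoint) hbdisj', hac, hbc, simpleZeroOn_bot,
    simpleZeroOn_bot, simple_add]
  simp_rw [row]
  rw [sumMP_ofFn_simpleZeroOn (fun i => (ha i).codisjoint) hadisj' _ _ fun i j => inf_le_left, hac,
    simpleZeroOn_bot]
  rfl
end

section
/- Let L be a frame, r_1 < ⋯ < r_k < 0 ≤ r_{k+1} < ⋯ < r_n rationals, and a_1, …, a_n pairwise disjoint complemented elements of L with a_1 ⊔ ⋯ ⊔ a_n = ⊤. Let f := Σ_{i=1}^{n} r_i·χ_{a_i}. Then the positive part f⁺ := f ⊔ 𝟎 equals Σ_{i=k+1}^{n} r_i·χ_{a_i}, and the negative part f⁻ := (−f) ⊔ 𝟎 equals Σ_{i=1}^{k} (−r_i)·χ_{a_i} (componentwise equalities of pairs). In particular the positive and negative parts of a measurable simple function are simple. -/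
/-!
Represent a pair by a set `S` of entries (value, region), with `u p` the join of the regions of
value `> p` and `v q` the join of those of value `< q`. In a frame the sum of two such pairs is
represented by the sums of values paired with the meets of regions, negation negates the values,
and, once the regions cover `⊤`, the join with `𝟎` replaces every value by its maximum with `0`.
Two representations give the same pair as soon as each region lies below the join of the other
representation's regions of the same value. By induction `Σ rᵢ·χ_{aᵢ}` is represented by the
entries `(rᵢ, aᵢ)` together with `(0, ⨅ aᵢᶜ)`. Clipping at `0` turns each negative entry into a
value-`0` entry, and these regions together with `⨅ aᵢᶜ` make up exactly the complement of the
join of the positive regions.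
-/

open Function

theorem List.iSup_mem_cons {α ι : Type*} [CompleteLattice α] (f : ι → α) (i : ι) (ℓ : List ι) :
    ⨆ j ∈ i :: ℓ, f j = f i ⊔ ⨆ j ∈ ℓ, f j := by
  simp only [List.mem_cons, iSup_or, iSup_sup_eq, iSup_iSup_eq_left]

theorem List.iInf_mem_cons {α ι : Type*} [CompleteLattice α] (f : ι → α) (i : ι) (ℓ : List ι) :
    ⨅ j ∈ i :: ℓ, f j = f i ⊓ ⨅ j ∈ ℓ, f j := by
  simp only [List.mem_cons, iInf_or, iInf_inf_eq, iInf_iInf_eq_left]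

namespace MP

section CompleteLattice

variable {L : Type*} [CompleteLattice L]

@[simps]
def step (S : Set (ℚ × L)) : MP L where
  u p := ⨆ x ∈ S, ⨆ (_ : p < x.1), x.2
  v q := ⨆ x ∈ S, ⨆ (_ : x.1 < q), x.2

def level (S : Set (ℚ × L)) (t : ℚ) : L := ⨆ y ∈ S, ⨆ (_ : y.1 = t), y.2

variable {S T : Set (ℚ × L)} {x : ℚ × L} {p q : ℚ}

lemma le_step_u (hx : x ∈ S) (h : p < x.1) : x.2 ≤ (step S).u p :=
  le_iSup₂_of_le x hx (le_iSup_of_le h le_rfl)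

lemma le_step_v (hx : x ∈ S) (h : x.1 < q) : x.2 ≤ (step S).v q :=
  le_iSup₂_of_le x hx (le_iSup_of_le h le_rfl)

lemma step_u_le {c : L} (h : ∀ x ∈ S, p < x.1 → x.2 ≤ c) : (step S).u p ≤ c :=
  iSup₂_le fun x hx => iSup_le (h x hx)

lemma step_v_le {c : L} (h : ∀ x ∈ S, x.1 < q → x.2 ≤ c) : (step S).v q ≤ c :=
  iSup₂_le fun x hx => iSup_le (h x hx)

lemma le_level {t : ℚ} {c : L} (hx : x ∈ S) (ht : x.1 = t) (h : c ≤ x.2) : c ≤ level S t :=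
  le_iSup₂_of_le x hx (le_iSup_of_le ht h)

lemma level_le_step_u {t : ℚ} (h : p < t) : level S t ≤ (step S).u p :=
  iSup₂_le fun _ hy => iSup_le fun hyt => le_step_u hy (hyt ▸ h)

lemma level_le_step_v {t : ℚ} (h : t < q) : level S t ≤ (step S).v q :=
  iSup₂_le fun _ hy => iSup_le fun hyt => le_step_v hy (hyt ▸ h)

lemma step_eq_step_of_le_level (hST : ∀ x ∈ S, x.2 ≤ level T x.1)
    (hTS : ∀ y ∈ T, y.2 ≤ level S y.1) : step S = step T := by
  ext p
  · exact le_antisymm (step_u_le fun x hx h => (hST x hx).trans (level_le_step_u h))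
      (step_u_le fun y hy h => (hTS y hy).trans (level_le_step_u h))
  · exact le_antisymm (step_v_le fun x hx h => (hST x hx).trans (level_le_step_v h))
      (step_v_le fun y hy h => (hTS y hy).trans (level_le_step_v h))

end CompleteLattice

variable {L : Type*} [Order.Frame L] {S T : Set (ℚ × L)}

theorem step_add :
    (step S).add (step T) = step (Set.image2 (fun x y => (x.1 + y.1, x.2 ⊓ y.2)) S T) := by
  ext p
  · refine le_antisymm (iSup_le fun t => ?_) (step_u_le ?_)
    · simp only [step_u, iSup_inf_eq, inf_iSup_eq, iSup_le_iff]
      intro y hy hyt x hx hxt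
      exact le_step_u (x := (x.1 + y.1, x.2 ⊓ y.2)) ⟨x, hx, y, hy, rfl⟩ (by dsimp only; linarith)
    · rintro _ ⟨x, hx, y, hy, rfl⟩ (h : p < x.1 + y.1)
      refine le_iSup_of_le ((x.1 + p - y.1) / 2) (inf_le_inf ?_ ?_)
      · exact le_step_u hx (by linarith)
      · exact le_step_u hy (by linarith)
  · refine le_antisymm (iSup_le fun t => ?_) (step_v_le ?_)
    · simp only [step_v, iSup_inf_eq, inf_iSup_eq, iSup_le_iff]
      intro y hy hyt x hx hxt
      exact le_step_v (x := (x.1 + y.1, x.2 ⊓ y.2)) ⟨x, hx, y, hy, rfl⟩ (by dsimp only; linarith)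
    · rintro _ ⟨x, hx, y, hy, rfl⟩ (h : x.1 + y.1 < p)
      refine le_iSup_of_le ((x.1 + p - y.1) / 2) (inf_le_inf ?_ ?_)
      · exact le_step_v hx (by linarith)
      · exact le_step_v hy (by linarith)

theorem step_neg : (step S).neg = step ((fun x => (-x.1, x.2)) '' S) := by
  ext p
  · simp only [neg, step_u, step_v, iSup_image, lt_neg]
  · simp only [neg, step_u, step_v, iSup_image, neg_lt]

theorem step_sup_zeroMP (hS : ⨆ x ∈ S, x.2 = ⊤) :
    (step S).sup (zeroMP L) = step ((fun x => (max x.1 0, x.2)) '' S) := by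
  ext p
  · simp only [sup, zeroMP, step_u, iSup_image, lt_max_iff]
    split_ifs with hp
    · rw [sup_top_eq, eq_comm, eq_top_iff, ← hS]
      exact iSup₂_mono fun x _ => le_iSup_of_le (Or.inr hp) le_rfl
    · simp only [sup_bot_eq, hp, or_false]
  · simp only [sup, zeroMP, step_v, iSup_image, max_lt_iff]
    split_ifs with hq
    · simp only [inf_bot_eq, (not_lt.2 hq), and_false, iSup_false, iSup_bot]
    · simp only [inf_top_eq, not_le.1 hq, and_true]

theorem zeroMP_eq_step : zeroMP L = step {(0, ⊤)} := by
  ext p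
  · simp only [zeroMP, step_u, iSup_singleton, iSup_eq_if]
  · simp only [zeroMP, step_v, iSup_singleton, iSup_eq_if]
    split_ifs <;> first | rfl | (exfalso; linarith)

theorem step_add_zeroMP : (step S).add (zeroMP L) = step S := by
  rw [zeroMP_eq_step, step_add, Set.image2_singleton_right]
  simp only [add_zero, inf_top_eq, Prod.mk.eta, Set.image_id']

end MP

open MP

section

variable {L : Type*} [Order.Frame L]

theorem sChi_eq_step {a ac : L} (h : IsCompl a ac) (r : ℚ) :
    sChi r a ac = step {(r, a), (0, ac)} := by
  ext p
  · simp only [sChi, step_u, iSup_insert, iSup_singleton, iSup_eq_if]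
    split_ifs <;> first | rfl | (exfalso; linarith) | simp [h.sup_eq_top]
  · simp only [sChi, step_v, iSup_insert, iSup_singleton, iSup_eq_if]
    split_ifs <;> first | rfl | (exfalso; linarith) | simp [h.sup_eq_top]

variable {ι : Type*} (r : ι → ℚ) (a ac : ι → L)

def chiSteps (ℓ : List ι) : Set (ℚ × L) :=
  insert (0, ⨅ i ∈ ℓ, ac i) ((fun i => (r i, a i)) '' {i | i ∈ ℓ})

lemma isCompl_biSup_biInf {ℓ : List ι} (h : ∀ i ∈ ℓ, IsCompl (a i) (ac i)) :
    IsCompl (⨆ i ∈ ℓ, a i) (⨅ i ∈ ℓ, ac i) := by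
  induction ℓ with
  | nil => simpa using isCompl_bot_top
  | cons j ℓ ih =>
    rw [List.iSup_mem_cons, List.iInf_mem_cons]
    exact (h j (List.mem_cons_self ..)).sup_inf (ih fun i hi => h i (List.mem_cons_of_mem j hi))

@[simp] lemma chiSteps_nil : chiSteps r a ac [] = {(0, ⊤)} := by
  simp [chiSteps]

lemma iSup_chiSteps {ℓ : List ι} (h : ∀ i ∈ ℓ, IsCompl (a i) (ac i)) :
    ⨆ x ∈ chiSteps r a ac ℓ, x.2 = ⊤ := by
  simp only [chiSteps, iSup_insert, iSup_image]
  exact (isCompl_biSup_biInf a ac h).symm.sup_eq_top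

lemma image_neg_chiSteps (ℓ : List ι) :
    (fun x => (-x.1, x.2)) '' chiSteps r a ac ℓ = chiSteps (-r) a ac ℓ := by
  simp only [chiSteps, Set.image_insert_eq, Set.image_image, neg_zero, Pi.neg_apply]

variable {r a ac}

lemma le_biInf_of_notMem (hc : ∀ i, IsCompl (a i) (ac i)) (hd : Pairwise (Disjoint on a))
    {i : ι} {ℓ : List ι} (hi : i ∉ ℓ) : a i ≤ ⨅ j ∈ ℓ, ac j :=
  le_iInf₂ fun j hj => (hc j).le_right_iff.2 (hd fun hij => hi (hij ▸ hj))

theorem sChi_add_step_chiSteps (hc : ∀ i, IsCompl (a i) (ac i))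
    (hd : Pairwise (Disjoint on a)) {i : ι} {ℓ : List ι} (hi : i ∉ ℓ) :
    (sChi (r i) (a i) (ac i)).add (step (chiSteps r a ac ℓ)) = step (chiSteps r a ac (i :: ℓ)) := by
  have hai := le_biInf_of_notMem hc hd hi
  have hne : ∀ j ∈ ℓ, i ≠ j := fun j hj hij => hi (hij ▸ hj)
  rw [sChi_eq_step (hc i), step_add]
  apply step_eq_step_of_le_level
  · rintro _ ⟨x, rfl | rfl, y, rfl | ⟨j, hj, rfl⟩, rfl⟩ <;> dsimp only
    · exact le_level (Set.mem_insert_of_mem _ ⟨i, List.mem_cons_self .., rfl⟩) (add_zero _).symm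
        inf_le_left
    · rw [(hd (hne j hj)).eq_bot]
      exact bot_le
    · exact le_level (Set.mem_insert _ _) (add_zero _).symm (by rw [List.iInf_mem_cons])
    · exact le_level (Set.mem_insert_of_mem _ ⟨j, List.mem_cons_of_mem _ hj, rfl⟩)
        (zero_add _).symm inf_le_right
  · rintro _ (rfl | ⟨j, hj, rfl⟩)
    · exact le_level (Set.mem_image2_of_mem (Set.mem_insert_of_mem _ rfl) (Set.mem_insert _ _))
        (add_zero _) (List.iInf_mem_cons ..).le
    obtain rfl | hj := List.mem_cons.1 hj
    · exact le_level (Set.mem_image2_of_mem (Set.mem_insert _ _) (Set.mem_insert _ _))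
        (add_zero _) (le_inf le_rfl hai)
    · exact le_level (Set.mem_image2_of_mem (Set.mem_insert_of_mem _ rfl)
        (Set.mem_insert_of_mem _ ⟨j, hj, rfl⟩)) (zero_add _)
        (le_inf ((hc i).le_right_iff.2 (hd (hne j hj).symm)) le_rfl)

theorem sumMP_map_sChi (hc : ∀ i, IsCompl (a i) (ac i)) (hd : Pairwise (Disjoint on a))
    {ℓ : List ι} (hℓ : ℓ.Nodup) :
    sumMP (ℓ.map fun i => sChi (r i) (a i) (ac i)) = step (chiSteps r a ac ℓ) := by
  induction ℓ with
  | nil => rw [chiSteps_nil, ← zeroMP_eq_step]; rfl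
  | cons i ℓ ih =>
    obtain ⟨hi, hℓ⟩ := List.nodup_cons.1 hℓ
    rw [← sChi_add_step_chiSteps hc hd hi]
    cases ℓ with
    | nil =>
      show sChi (r i) (a i) (ac i) = _
      rw [chiSteps_nil, ← zeroMP_eq_step, sChi_eq_step (hc i), step_add_zeroMP]
    | cons j ℓ => rw [← ih hℓ]; rfl

lemma biInf_le_level_max_zero (hc : ∀ i, IsCompl (a i) (ac i)) {ℓ ℓ' : List ι}
    (hpos : ∀ i ∈ ℓ, 0 < r i → i ∈ ℓ') :
    ⨅ i ∈ ℓ', ac i ≤ level ((fun x => (max x.1 0, x.2)) '' chiSteps r a ac ℓ) 0 := by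
  have hI : (0, ⨅ i ∈ ℓ, ac i) ∈ (fun x => (max x.1 0, x.2)) '' chiSteps r a ac ℓ :=
    ⟨_, Set.mem_insert _ _, by simp⟩
  calc ⨅ i ∈ ℓ', ac i
      = (⨅ i ∈ ℓ', ac i) ⊓ ((⨅ i ∈ ℓ, ac i) ⊔ ⨆ i ∈ ℓ, a i) := by
        rw [(isCompl_biSup_biInf a ac fun i _ => hc i).symm.sup_eq_top, inf_top_eq]
    _ = ((⨅ i ∈ ℓ', ac i) ⊓ ⨅ i ∈ ℓ, ac i) ⊔ ⨆ i ∈ ℓ, (⨅ i ∈ ℓ', ac i) ⊓ a i := by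
        rw [inf_sup_left, inf_iSup₂_eq]
    _ ≤ _ := by
      refine sup_le (le_level hI rfl inf_le_right) (iSup₂_le fun i hi => ?_)
      by_cases hri : 0 < r i
      · calc (⨅ j ∈ ℓ', ac j) ⊓ a i ≤ ac i ⊓ a i := inf_le_inf_right _ (iInf₂_le i (hpos i hi hri))
          _ = ⊥ := (hc i).symm.inf_eq_bot
          _ ≤ _ := bot_le
      · exact le_level ⟨_, Set.mem_insert_of_mem _ ⟨i, hi, rfl⟩, rfl⟩ (max_eq_right (not_lt.1 hri))
          inf_le_right

theorem step_chiSteps_sup_zeroMP (hc : ∀ i, IsCompl (a i) (ac i)) (hd : Pairwise (Disjoint on a))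
    {ℓ ℓ' : List ι} (hsub : ∀ i ∈ ℓ', i ∈ ℓ ∧ 0 ≤ r i) (hpos : ∀ i ∈ ℓ, 0 < r i → i ∈ ℓ') :
    (step (chiSteps r a ac ℓ)).sup (zeroMP L) = step (chiSteps r a ac ℓ') := by
  rw [step_sup_zeroMP (iSup_chiSteps r a ac fun i _ => hc i)]
  apply step_eq_step_of_le_level
  · rintro _ ⟨_, rfl | ⟨i, hi, rfl⟩, rfl⟩
    · exact le_level (Set.mem_insert _ _) (max_self 0).symm
        (biInf_mono fun i hi => (hsub i hi).1)
    by_cases hi' : i ∈ ℓ'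
    · exact le_level (Set.mem_insert_of_mem _ ⟨i, hi', rfl⟩) (max_eq_left (hsub i hi').2).symm
        le_rfl
    · exact le_level (Set.mem_insert _ _)
        (max_eq_right (not_lt.1 fun h => hi' (hpos i hi h))).symm (le_biInf_of_notMem hc hd hi')
  · rintro _ (rfl | ⟨i, hi, rfl⟩)
    · exact biInf_le_level_max_zero hc hpos
    · exact le_level ⟨_, Set.mem_insert_of_mem _ ⟨i, (hsub i hi).1, rfl⟩, rfl⟩
        (max_eq_left (hsub i hi).2) le_rfl

end

/-- Positive and negative parts of a simple function in canonical form: if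
`f = Σ_{i=1}^{n} r_i·χ_{a_i}` with `r_1 < ⋯ < r_k < 0 ≤ r_{k+1} < ⋯ < r_n`, then
`f⁺ = f ⊔ 𝟎 = Σ_{i=k+1}^{n} r_i·χ_{a_i}` and `f⁻ = (−f) ⊔ 𝟎 = Σ_{i=1}^{k} (−r_i)·χ_{a_i}`;
in particular the positive and negative parts of a measurable simple function are simple. -/
theorem pos_neg_parts_of_simple {L : Type*} [Order.Frame L]
    (n k : ℕ) (hkn : k ≤ n)
    (r : Fin n → ℚ)
    (hneg : ∀ i : Fin n, (i : ℕ) < k ↔ r i < 0)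
    (a ac : Fin n → L) (ha : ∀ i, IsCompl (a i) (ac i))
    (hdisj : ∀ i j, i ≠ j → a i ⊓ a j = ⊥)
    (f : MP L) (hf : f = sumMP (List.ofFn fun i => sChi (r i) (a i) (ac i))) :
    f.sup (zeroMP L) =
      sumMP (List.ofFn fun j : Fin (n - k) =>
        sChi (r ⟨k + (j : ℕ), by have := j.isLt; omega⟩)
          (a ⟨k + (j : ℕ), by have := j.isLt; omega⟩)
          (ac ⟨k + (j : ℕ), by have := j.isLt; omega⟩)) ∧
    f.neg.sup (zeroMP L) =
      sumMP (List.ofFn fun i : Fin k =>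
        sChi (-(r ⟨(i : ℕ), by have := i.isLt; omega⟩))
          (a ⟨(i : ℕ), by have := i.isLt; omega⟩)
          (ac ⟨(i : ℕ), by have := i.isLt; omega⟩)) := by
  have hd : Pairwise (Disjoint on a) := fun i j hij => disjoint_iff.2 (hdisj i j hij)
  set pos : List (Fin n) := List.ofFn fun j : Fin (n - k) => ⟨k + j, by omega⟩
  set neg : List (Fin n) := List.ofFn fun i : Fin k => ⟨i, by omega⟩
  have mem_pos (i : Fin n) : i ∈ pos ↔ k ≤ i := by
    simp only [pos, List.mem_ofFn]
    exact ⟨fun ⟨j, hj⟩ => hj ▸ Nat.le_add_right k j,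
      fun hi => ⟨⟨i - k, by omega⟩, Fin.ext (by simp; omega)⟩⟩
  have mem_neg (i : Fin n) : i ∈ neg ↔ (i : ℕ) < k := by
    simp only [neg, List.mem_ofFn]
    exact ⟨fun ⟨j, hj⟩ => hj ▸ j.isLt, fun hi => ⟨⟨i, hi⟩, rfl⟩⟩
  have hf' : f = step (chiSteps r a ac (List.finRange n)) := by
    rw [hf, List.ofFn_eq_map, sumMP_map_sChi ha hd (List.nodup_finRange n)]
  have nodup_pos : pos.Nodup := List.nodup_ofFn.2 fun j j' h => Fin.ext (by simpa using h)
  have nodup_neg : neg.Nodup := List.nodup_ofFn.2 fun i i' h => Fin.ext (by simpa using h)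
  constructor
  · rw [hf', step_chiSteps_sup_zeroMP ha hd (ℓ' := pos)
        (fun i hi => ⟨List.mem_finRange i, not_lt.1 fun h => by
          have := (hneg i).2 h; have := (mem_pos i).1 hi; omega⟩)
        (fun i _ hri => (mem_pos i).2 (not_lt.1 fun h => ((hneg i).1 h).not_gt hri)),
      ← sumMP_map_sChi ha hd nodup_pos, List.map_ofFn]
    rfl
  · rw [hf', step_neg, image_neg_chiSteps, step_chiSteps_sup_zeroMP (r := -r) ha hd (ℓ' := neg)
        (fun i hi => ⟨List.mem_finRange i, neg_nonneg.2 ((hneg i).1 ((mem_neg i).1 hi)).le⟩)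
        (fun i _ hri => (mem_neg i).2 ((hneg i).2 (neg_pos.1 hri))),
      ← sumMP_map_sChi ha hd nodup_neg, List.map_ofFn]
    rfl
end

section
/- Let L be a frame, r_1, …, r_n rationals, and a_1, …, a_n pairwise disjoint complemented elements of L. Let g := Σ_{i=1}^{n} r_i·χ_{a_i} with components (u_g, v_g). If g is nonnegative, i.e. v_g 0 = ⊥, then a_i = ⊥ for every i with r_i < 0. (This is the lattice content of the fact that for a nonnegative simple function represented with pairwise disjoint complemented congruences, the σ-sublocales attached to negative coefficients have measure zero: μ(S_i ∧ S) = 0 whenever r_i < 0.) -/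
/-
For `r_i < 0`, write `0` as a sum of rationals `t_j` with `r_i < t_i ≤ 0` and `t_j > 0`
for `j ≠ i`. By disjointness `a_i ≤ a_jᶜ`, so `a_i` lies below `v_{r_j χ_{a_j}} (t_j)` for every `j`,
hence below `v_g (Σ t_j) = v_g 0 = ⊥`.
-/

namespace MP

variable {L : Type*} [Order.Frame L]

theorem le_add_v {f g : MP L} {x : L} {s t : ℚ} (hf : x ≤ f.v s) (hg : x ≤ g.v t) :
    x ≤ (f.add g).v (s + t) :=
  le_iSup_of_le s (le_inf hf (by rwa [add_sub_cancel_left]))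

end MP

section

variable {L : Type*} [Order.Frame L]

theorem le_sumMP_ofFn_v {n : ℕ} (f : Fin (n + 1) → MP L) (t : Fin (n + 1) → ℚ) {x : L}
    (hx : ∀ i, x ≤ (f i).v (t i)) : x ≤ (sumMP (List.ofFn f)).v (∑ i, t i) := by
  induction n with
  | zero => simpa [sumMP] using hx 0
  | succ m ih =>
    rw [List.ofFn_succ, List.ofFn_succ, Fin.sum_univ_succ]
    exact MP.le_add_v (hx 0) (by simpa [List.ofFn_succ] using ih _ _ fun i => hx i.succ)

theorem sChi_v_of_neg {r q : ℚ} (a ac : L) (hr : r < 0) (hrq : r < q) (hq : q ≤ 0) :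
    (sChi r a ac).v q = a := by
  simp [sChi, hr.not_gt, hr.ne, hrq.not_ge, hq]

theorem le_sChi_v_of_le_compl {r q : ℚ} {a ac x : L} (hx : x ≤ ac) (hq : 0 < q) :
    x ≤ (sChi r a ac).v q := by
  simp only [sChi]
  split_ifs <;> first | exact le_top | exact hx | (exfalso; linarith)

end

/-- If `g = Σ_{i=1}^{n} r_i·χ_{a_i}` with pairwise disjoint complemented `a_i` is
nonnegative (`v_g 0 = ⊥`), then `a_i = ⊥` whenever `r_i < 0`. -/
theorem nonneg_simple_neg_coeff_bot {L : Type*} [Order.Frame L]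
    (n : ℕ) (r : Fin n → ℚ)
    (a ac : Fin n → L) (ha : ∀ i, IsCompl (a i) (ac i))
    (hdisj : ∀ i j, i ≠ j → a i ⊓ a j = ⊥)
    (g : MP L) (hg : g = sumMP (List.ofFn fun i => sChi (r i) (a i) (ac i)))
    (hnn : g.v 0 = ⊥) :
    ∀ i, r i < 0 → a i = ⊥ := by
  subst hg
  intro i hri
  obtain ⟨m, rfl⟩ : ∃ m, n = m + 1 := ⟨n - 1, by have := i.pos; omega⟩
  set ε : ℚ := -r i / (m + 1)
  have hε : 0 < ε := div_pos (neg_pos.2 hri) (by positivity)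
  have hε_le : ε ≤ -r i := div_le_self (neg_pos.2 hri).le (by simp)
  let t : Fin (m + 1) → ℚ := fun j => ε + if j = i then r i else 0
  have ht : ∑ j, t j = 0 := by
    simp only [t, Finset.sum_add_distrib, Finset.sum_const, Finset.card_univ, Fintype.card_fin,
      Finset.sum_ite_eq', Finset.mem_univ, if_true, nsmul_eq_mul, ε]
    push_cast
    field_simp
    ring
  have hbelow : ∀ j, a i ≤ (sChi (r j) (a j) (ac j)).v (t j) := by
    intro j
    by_cases hj : j = i
    · subst hj
      simp only [t, if_true]
      rw [sChi_v_of_neg _ _ hri (by linarith) (by linarith)]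
    · simp only [t, hj, if_false, add_zero]
      exact le_sChi_v_of_le_compl
        ((ha j).le_right_iff.2 (disjoint_iff.2 (hdisj i j (Ne.symm hj)))) hε
  have key := le_sumMP_ofFn_v _ t hbelow
  rwa [ht, hnn, le_bot_iff] at key
end

section
/- Let C be a coframe, μ a measure on C, r_1, …, r_n nonnegative rationals, and A_1, …, A_n pairwise disjoint complemented elements of C. Define η : C → [0,∞] by η(S) := Σ_{i=1}^{n} r_i · μ(A_i ⊓ S). Then for every increasing sequence (B_k)_{k∈ℕ} in C: η(⨆_{k∈ℕ} B_k) = ⨆_{k∈ℕ} η(B_k). (σ-continuity of the indefinite integral of a nonnegative simple function.) -/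
open scoped ENNReal

/-- For a complemented element `a` in a coframe, meet with `a` distributes over
countable suprema. -/
lemma compl_inf_iSup {C : Type*} [Order.Coframe C] {a ac : C} (h : IsCompl a ac)
    (s : ℕ → C) : a ⊓ ⨆ k, s k = ⨆ k, a ⊓ s k := by
  refine le_antisymm ?_ (by simp only [le_inf_iff]; exact
    ⟨iSup_le fun k => inf_le_left, iSup_mono fun k => inf_le_right⟩)
  have h1 : (⨆ k, s k) ≤ (⨆ k, a ⊓ s k) ⊔ ac := by
    refine iSup_le fun k => ?_
    calc s k ≤ (a ⊔ ac) ⊓ (s k ⊔ ac) := by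
          rw [h.sup_eq_top, top_inf_eq]; exact le_sup_left
      _ = (a ⊓ s k) ⊔ ac := (sup_inf_right _ _ _).symm
      _ ≤ (⨆ k, a ⊓ s k) ⊔ ac := sup_le_sup_right (le_iSup (fun k => a ⊓ s k) k) _
  calc a ⊓ ⨆ k, s k ≤ a ⊓ ((⨆ k, a ⊓ s k) ⊔ ac) := inf_le_inf_left _ h1
    _ = (a ⊓ ⨆ k, a ⊓ s k) ⊔ (a ⊓ ac) := inf_sup_left _ _ _
    _ ≤ ⨆ k, a ⊓ s k := by rw [h.inf_eq_bot, sup_bot_eq]; exact inf_le_right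

/-- σ-continuity of the indefinite integral of a nonnegative simple function: for a
measure `μ` on a coframe `C`, nonnegative rationals `r i`, and pairwise disjoint
complemented elements `A i`, the map `η S = Σ_i r_i · μ (A_i ⊓ S)` satisfies
`η (⨆ k, B k) = ⨆ k, η (B k)` for every increasing sequence `(B k)`. -/
theorem indefinite_integral_scontinuous {C : Type*} [Order.Coframe C]
    (μ : C → ℝ≥0∞) (hbot : μ ⊥ = 0) (hmono : Monotone μ)
    (hmod : ∀ x y : C, μ x + μ y = μ (x ⊔ y) + μ (x ⊓ y))
    (hcont : ∀ x : ℕ → C, Monotone x → μ (⨆ i, x i) = ⨆ i, μ (x i))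
    (n : ℕ) (r : Fin n → ℚ) (hr : ∀ i, 0 ≤ r i)
    (A Ac : Fin n → C) (hA : ∀ i, IsCompl (A i) (Ac i))
    (hdisj : ∀ i j, i ≠ j → A i ⊓ A j = ⊥)
    (η : C → ℝ≥0∞) (hη : η = fun S => ∑ i, ENNReal.ofReal (r i) * μ (A i ⊓ S))
    (B : ℕ → C) (hB : Monotone B) :
    η (⨆ k, B k) = ⨆ k, η (B k) := by
  subst hη
  have key : ∀ i : Fin n, μ (A i ⊓ ⨆ k, B k) = ⨆ k, μ (A i ⊓ B k) := fun i => by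
    rw [compl_inf_iSup (hA i)]
    exact hcont _ fun j k hjk => inf_le_inf_left _ (hB hjk)
  simp only [key]
  have : ∀ i : Fin n, ENNReal.ofReal (r i) * ⨆ k, μ (A i ⊓ B k)
      = ⨆ k, ENNReal.ofReal (r i) * μ (A i ⊓ B k) := fun i => ENNReal.mul_iSup _ _
  simp only [this]
  exact ENNReal.finsetSum_iSup_of_monotone fun i j k hjk =>
    mul_le_mul_right (hmono (inf_le_inf_left _ (hB hjk))) _
end

section
/- Let C be a coframe and μ a measure on C. Let r_1, …, r_n and s_1, …, s_m be nonnegative rationals, let A_1, …, A_n be pairwise disjoint complemented elements of C with A_1 ⊔ ⋯ ⊔ A_n = ⊤, and let B_1, …, B_m be pairwise disjoint complemented elements of C with B_1 ⊔ ⋯ ⊔ B_m = ⊤. Then for every S ∈ C: Σ_{i=1}^{n} r_i·μ(A_i ⊓ S) + Σ_{j=1}^{m} s_j·μ(B_j ⊓ S) = Σ_{i=1}^{n} Σ_{j=1}^{m} (r_i + s_j)·μ(A_i ⊓ B_j ⊓ S). (Additivity of the integral of nonnegative simple functions: ∫_S g dμ + ∫_S h dμ = ∫_S (g+h) dμ.)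 -/
open scoped ENNReal

private lemma measure_finset_sup {C : Type*} [Order.Coframe C]
    (μ : C → ℝ≥0∞) (hbot : μ ⊥ = 0)
    (hmod : ∀ x y : C, μ x + μ y = μ (x ⊔ y) + μ (x ⊓ y))
    {ι : Type*} [DecidableEq ι] (x : ι → C) (t : Finset ι)
    (hd : ∀ i ∈ t, ∀ j ∈ t, i ≠ j → x i ⊓ x j = ⊥) :
    ∑ i ∈ t, μ (x i) = μ (t.sup x) := by
  induction t using Finset.induction_on with
  | empty => simp [hbot]
  | @insert a t ha ih =>
    rw [Finset.sum_insert ha, Finset.sup_insert,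
      ih (fun i hi j hj hij => hd i (Finset.mem_insert_of_mem hi)
        j (Finset.mem_insert_of_mem hj) hij), hmod]
    have : x a ⊓ t.sup x = ⊥ := by
      rw [Finset.sup_inf_distrib_left]
      apply (Finset.sup_eq_bot_iff _ _).mpr
      intro i hi
      exact hd a (Finset.mem_insert_self a t) i (Finset.mem_insert_of_mem hi)
        (by rintro rfl; exact ha hi)
    rw [this, hbot, add_zero]

/-- Additivity of the integral of nonnegative simple functions in canonical form:
`∫_S g dμ + ∫_S h dμ = ∫_S (g + h) dμ`, i.e.
`Σ_i r_i·μ(A_i ⊓ S) + Σ_j s_j·μ(B_j ⊓ S) = Σ_i Σ_j (r_i + s_j)·μ(A_i ⊓ B_j ⊓ S)`. -/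
theorem integral_simple_add {C : Type*} [Order.Coframe C]
    (μ : C → ℝ≥0∞) (hbot : μ ⊥ = 0) (hmono : Monotone μ)
    (hmod : ∀ x y : C, μ x + μ y = μ (x ⊔ y) + μ (x ⊓ y))
    (hcont : ∀ x : ℕ → C, Monotone x → μ (⨆ i, x i) = ⨆ i, μ (x i))
    (n m : ℕ) (r : Fin n → ℚ) (hr : ∀ i, 0 ≤ r i) (s : Fin m → ℚ) (hs : ∀ j, 0 ≤ s j)
    (A Ac : Fin n → C) (hA : ∀ i, IsCompl (A i) (Ac i))
    (hAdisj : ∀ i j, i ≠ j → A i ⊓ A j = ⊥) (hAcov : (⨆ i, A i) = ⊤)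
    (B Bc : Fin m → C) (hB : ∀ j, IsCompl (B j) (Bc j))
    (hBdisj : ∀ i j, i ≠ j → B i ⊓ B j = ⊥) (hBcov : (⨆ j, B j) = ⊤)
    (S : C) :
    (∑ i, ENNReal.ofReal (r i) * μ (A i ⊓ S)) +
      (∑ j, ENNReal.ofReal (s j) * μ (B j ⊓ S)) =
    ∑ i, ∑ j, ENNReal.ofReal (r i + s j) * μ (A i ⊓ B j ⊓ S) := by
  have key1 : ∀ i, μ (A i ⊓ S) = ∑ j, μ (A i ⊓ B j ⊓ S) := by
    intro i
    have hd : ∀ j ∈ Finset.univ, ∀ k ∈ Finset.univ, j ≠ k →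
        (fun j => A i ⊓ B j ⊓ S) j ⊓ (fun j => A i ⊓ B j ⊓ S) k = ⊥ := by
      intro j _ k _ hjk
      refine le_bot_iff.mp ?_
      calc A i ⊓ B j ⊓ S ⊓ (A i ⊓ B k ⊓ S)
          ≤ B j ⊓ B k := inf_le_inf (inf_le_left.trans inf_le_right)
            (inf_le_left.trans inf_le_right)
        _ ≤ ⊥ := (hBdisj j k hjk).le
    have hsum := measure_finset_sup μ hbot hmod (fun j => A i ⊓ B j ⊓ S) Finset.univ hd
    have hsup : (Finset.univ.sup fun j => A i ⊓ B j ⊓ S)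
        = (A i ⊓ S) ⊓ Finset.univ.sup B := by
      rw [Finset.sup_inf_distrib_left]
      refine Finset.sup_congr rfl fun j _ => ?_
      simp [inf_comm, inf_assoc, inf_left_comm]
    rw [hsum, hsup, Finset.sup_univ_eq_iSup, hBcov, inf_top_eq]
  have key2 : ∀ j, μ (B j ⊓ S) = ∑ i, μ (A i ⊓ B j ⊓ S) := by
    intro j
    have hd : ∀ i ∈ Finset.univ, ∀ k ∈ Finset.univ, i ≠ k →
        (fun i => A i ⊓ B j ⊓ S) i ⊓ (fun i => A i ⊓ B j ⊓ S) k = ⊥ := by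
      intro i _ k _ hik
      refine le_bot_iff.mp ?_
      calc A i ⊓ B j ⊓ S ⊓ (A k ⊓ B j ⊓ S)
          ≤ A i ⊓ A k := inf_le_inf (inf_le_left.trans inf_le_left)
            (inf_le_left.trans inf_le_left)
        _ ≤ ⊥ := (hAdisj i k hik).le
    have hsum := measure_finset_sup μ hbot hmod (fun i => A i ⊓ B j ⊓ S) Finset.univ hd
    have hsup : (Finset.univ.sup fun i => A i ⊓ B j ⊓ S)
        = (B j ⊓ S) ⊓ Finset.univ.sup A := by
      rw [Finset.sup_inf_distrib_left]
      refine Finset.sup_congr rfl fun i _ => ?_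
      simp [inf_comm, inf_assoc, inf_left_comm]
    rw [hsum, hsup, Finset.sup_univ_eq_iSup, hAcov, inf_top_eq]
  have hsplit : ∀ i j, ENNReal.ofReal (r i + s j) * μ (A i ⊓ B j ⊓ S)
      = ENNReal.ofReal (r i) * μ (A i ⊓ B j ⊓ S)
        + ENNReal.ofReal (s j) * μ (A i ⊓ B j ⊓ S) := by
    intro i j
    rw [← add_mul]
    congr 1
    push_cast
    rw [ENNReal.ofReal_add (by exact_mod_cast hr i) (by exact_mod_cast hs j)]
  simp only [hsplit, Finset.sum_add_distrib]
  congr 1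
  · simp only [key1, Finset.mul_sum]
  · rw [Finset.sum_comm]
    simp only [key2, Finset.mul_sum]
end
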